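/- arXiv:1508.04095 — 14 statements merged into one kernel-verified Lean document; each statement's English description precedes it below -/
import Mathlib

section
/- The maximum success probability of sending k messages over channel W equals (1/k)·max over subsets S ⊆ X with |S| ≤ k of ∑_{y∈Y} max_{x∈S} W(y|x). Precisely: the maximum over stochastic encoders e : [k] → distributions on X and stochastic decoders d : Y → distributions on [k] of (1/k)∑_{x,y,i} e(x|i) W(y|x) d(i|y) equals (1/k)·max_{S⊆X, |S|≤k} f_W(S). -/
open Finset

lemma helper_le_sup {X : Type*} [Fintype X] (S : Finset X) (f : X → ℝ) (x : X) (hx : x ∈ S) :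
    f x ≤ ⨆ x ∈ S, f x := by
  have h1 : (⨆ _ : x ∈ S, f x) = f x := ciSup_pos (p := x ∈ S) hx
  calc f x = ⨆ _ : x ∈ S, f x := h1.symm
    _ ≤ ⨆ x ∈ S, f x :=
      le_ciSup (f := fun x => ⨆ _ : x ∈ S, f x) (Set.Finite.bddAbove (Set.finite_range _)) x

lemma helper_sup_le {X : Type*} [Fintype X] (S : Finset X) (f : X → ℝ) (c : ℝ) (hc : 0 ≤ c)
    (h : ∀ x ∈ S, f x ≤ c) : (⨆ x ∈ S, f x) ≤ c :=
  Real.iSup_le (fun x => Real.iSup_le (fun hx => h x hx) hc) hc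

/-- Construction of an encoder/decoder pair achieving `∑ y, ⨆ x ∈ S, W x y`. -/
lemma helper_construct {X Y : Type*} [Fintype X] [Fintype Y] (W : X → Y → ℝ)
    (hW_nonneg : ∀ x y, 0 ≤ W x y) (k : ℕ) (hk : 1 ≤ k)
    (S : Finset X) (hS : S.Nonempty) (hSk : S.card ≤ k) :
    ∃ e : Fin k → X → ℝ, ∃ d : Y → Fin k → ℝ,
      (∀ i x, 0 ≤ e i x) ∧ (∀ i, ∑ x, e i x = 1) ∧
      (∀ y i, 0 ≤ d y i) ∧ (∀ y, ∑ i, d y i = 1) ∧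
      ∑ i, ∑ x, ∑ y, e i x * W x y * d y i = ∑ y, ⨆ x ∈ S, W x y := by
  classical
  obtain ⟨x0, hx0⟩ := hS
  -- a function `Fin k → X` covering `S`
  set g : Fin k → X := fun i =>
    if h : (i : ℕ) < S.card then ((S.equivFin.symm ⟨i, h⟩ : S) : X) else x0 with hg
  have hgS : ∀ i, g i ∈ S := by
    intro i
    by_cases h : (i : ℕ) < S.card
    · simp only [hg, dif_pos h]; exact (S.equivFin.symm ⟨i, h⟩).2
    · simp only [hg, dif_neg h]; exact hx0
  have hgsurj : ∀ x ∈ S, ∃ i : Fin k, g i = x := by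
    intro x hx
    refine ⟨⟨(S.equivFin ⟨x, hx⟩ : Fin S.card), lt_of_lt_of_le (S.equivFin ⟨x, hx⟩).2 hSk⟩, ?_⟩
    have hlt : ((S.equivFin ⟨x, hx⟩ : Fin S.card) : ℕ) < S.card := (S.equivFin ⟨x, hx⟩).2
    simp only [hg]
    rw [dif_pos hlt, Fin.eta, Equiv.symm_apply_apply]
  -- for each y pick a maximizer of `W · y` on `S`
  have hxm : ∀ y : Y, ∃ x ∈ S, ∀ x' ∈ S, W x' y ≤ W x y := fun y =>
    Finset.exists_max_image S (fun x => W x y) ⟨x0, hx0⟩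
  choose xm hxmS hxmmax using hxm
  choose iy hiy using fun y => hgsurj (xm y) (hxmS y)
  refine ⟨fun i x => if x = g i then 1 else 0, fun y i => if i = iy y then 1 else 0,
    ?_, ?_, ?_, ?_, ?_⟩
  · intro i x; positivity
  · intro i; simp
  · intro y i; positivity
  · intro y; simp
  · have hstep : ∀ i, ∑ x, ∑ y, (if x = g i then (1:ℝ) else 0) * W x y *
        (if i = iy y then (1:ℝ) else 0)
        = ∑ y, (if i = iy y then W (g i) y else 0) := by
      intro i
      rw [Finset.sum_comm]
      refine Finset.sum_congr rfl fun y _ => ?_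
      rw [Finset.sum_eq_single (g i)]
      · simp
      · intro x _ hx; simp [hx]
      · intro h; exact absurd (mem_univ _) h
    calc ∑ i, ∑ x, ∑ y, (if x = g i then (1:ℝ) else 0) * W x y *
          (if i = iy y then (1:ℝ) else 0)
        = ∑ i, ∑ y, (if i = iy y then W (g i) y else 0) :=
          Finset.sum_congr rfl fun i _ => hstep i
      _ = ∑ y, ∑ i, (if i = iy y then W (g i) y else 0) := Finset.sum_comm
      _ = ∑ y, W (g (iy y)) y := by
          refine Finset.sum_congr rfl fun y _ => ?_
          rw [Finset.sum_eq_single (iy y)]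
          · simp
          · intro i _ hi; simp [hi]
          · intro h; exact absurd (mem_univ _) h
      _ = ∑ y, ⨆ x ∈ S, W x y := by
          refine Finset.sum_congr rfl fun y _ => ?_
          rw [hiy y]
          refine le_antisymm (helper_le_sup S (fun x => W x y) _ (hxmS y)) ?_
          exact helper_sup_le S (fun x => W x y) _ (hW_nonneg _ _) (fun x hx => hxmmax y x hx)

/-- the maximum success probability of sending `k` messages over channel `W`
equals `(1/k) · max_{S ⊆ X, |S| ≤ k} ∑_y max_{x∈S} W(y|x)`. -/
theorem success_eq_combinatorial_max {X Y : Type*} [Fintype X] [Fintype Y] (W : X → Y → ℝ)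
    (hW_nonneg : ∀ x y, 0 ≤ W x y) (hW_sum : ∀ x, ∑ y, W x y = 1)
    (k : ℕ) (hk : 1 ≤ k) (hkX : k ≤ Fintype.card X) :
    sSup { v : ℝ | ∃ e : Fin k → X → ℝ, ∃ d : Y → Fin k → ℝ,
        (∀ i x, 0 ≤ e i x) ∧ (∀ i, ∑ x, e i x = 1) ∧
        (∀ y i, 0 ≤ d y i) ∧ (∀ y, ∑ i, d y i = 1) ∧
        v = (1 / k) * ∑ i, ∑ x, ∑ y, e i x * W x y * d y i } =
      (1 / k) * sSup { v : ℝ | ∃ S : Finset X, S.card ≤ k ∧ v = ∑ y, ⨆ x ∈ S, W x y } := by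
  classical
  haveI hXne : Nonempty X := Fintype.card_pos_iff.mp (lt_of_lt_of_le hk hkX)
  have hkpos : (0:ℝ) < k := by exact_mod_cast hk
  set A := { v : ℝ | ∃ e : Fin k → X → ℝ, ∃ d : Y → Fin k → ℝ,
        (∀ i x, 0 ≤ e i x) ∧ (∀ i, ∑ x, e i x = 1) ∧
        (∀ y i, 0 ≤ d y i) ∧ (∀ y, ∑ i, d y i = 1) ∧
        v = (1 / k) * ∑ i, ∑ x, ∑ y, e i x * W x y * d y i } with hA
  set B := { v : ℝ | ∃ S : Finset X, S.card ≤ k ∧ v = ∑ y, ⨆ x ∈ S, W x y } with hB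
  -- W is bounded by 1
  have hW_le_one : ∀ x y, W x y ≤ 1 := by
    intro x y
    calc W x y ≤ ∑ y', W x y' :=
      Finset.single_le_sum (fun y' _ => hW_nonneg x y') (mem_univ y)
    _ = 1 := hW_sum x
  -- membership in A from a construction on a nonempty S
  have hmemA : ∀ S : Finset X, S.Nonempty → S.card ≤ k →
      ((1 / k) * ∑ y, ⨆ x ∈ S, W x y) ∈ A := by
    intro S hS hSk
    obtain ⟨e, d, h1, h2, h3, h4, h5⟩ := helper_construct W hW_nonneg k hk S hS hSk
    exact ⟨e, d, h1, h2, h3, h4, by rw [h5]⟩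
  have hsupnn : ∀ S : Finset X, S.Nonempty → (0:ℝ) ≤ ∑ y, ⨆ x ∈ S, W x y := by
    intro S ⟨x0, hx0⟩
    refine Finset.sum_nonneg fun y _ => le_trans (hW_nonneg x0 y) (helper_le_sup S (fun x => W x y) x0 hx0)
  -- A is nonempty
  obtain ⟨x0⟩ := id hXne
  have hcard1 : ({x0} : Finset X).card ≤ k := by simpa using hk
  have hAne : A.Nonempty := ⟨_, hmemA {x0} ⟨x0, mem_singleton_self x0⟩ hcard1⟩
  -- B is bounded above
  have hBbdd : BddAbove B := by
    refine ⟨(Fintype.card Y : ℝ), fun v hv => ?_⟩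
    obtain ⟨S, hSk, rfl⟩ := hv
    calc ∑ y, ⨆ x ∈ S, W x y ≤ ∑ _y : Y, (1:ℝ) := by
          refine Finset.sum_le_sum fun y _ => ?_
          exact helper_sup_le S (fun x => W x y) _ zero_le_one (fun x _ => hW_le_one x y)
      _ = (Fintype.card Y : ℝ) := by simp
  -- Each element of A is at most (1/k) * sSup B
  have hkey : ∀ v ∈ A, v ≤ (1 / k) * sSup B := by
    rintro v ⟨e, d, he0, he1, hd0, hd1, rfl⟩
    -- for each i, pick a maximizer of x ↦ ∑ y, W x y * d y i
    have hxi : ∀ i : Fin k, ∃ x : X, ∀ x' : X, (∑ y, W x' y * d y i) ≤ ∑ y, W x y * d y i := by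
      intro i
      obtain ⟨x, _, hx⟩ := Finset.exists_max_image univ
        (fun x => ∑ y, W x y * d y i) univ_nonempty
      exact ⟨x, fun x' => hx x' (mem_univ x')⟩
    choose xi hxi using hxi
    set S : Finset X := Finset.image xi univ with hS
    have hSk : S.card ≤ k := by
      calc S.card = (Finset.image xi univ).card := by rw [hS]
        _ ≤ (univ : Finset (Fin k)).card := Finset.card_image_le
        _ = k := by simp
    have hsum : (∑ i, ∑ x, ∑ y, e i x * W x y * d y i) ≤ ∑ y, ⨆ x ∈ S, W x y := by
      calc ∑ i, ∑ x, ∑ y, e i x * W x y * d y i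
          = ∑ i, ∑ x, e i x * ∑ y, W x y * d y i := by
            refine Finset.sum_congr rfl fun i _ => Finset.sum_congr rfl fun x _ => ?_
            rw [Finset.mul_sum]
            exact Finset.sum_congr rfl fun y _ => by ring
        _ ≤ ∑ i, ∑ x, e i x * ∑ y, W (xi i) y * d y i := by
            refine Finset.sum_le_sum fun i _ => Finset.sum_le_sum fun x _ => ?_
            exact mul_le_mul_of_nonneg_left (hxi i x) (he0 i x)
        _ = ∑ i, ∑ y, W (xi i) y * d y i := by
            refine Finset.sum_congr rfl fun i _ => ?_
            rw [← Finset.sum_mul, he1 i, one_mul]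
        _ = ∑ y, ∑ i, W (xi i) y * d y i := Finset.sum_comm
        _ ≤ ∑ y, ∑ i, (⨆ x ∈ S, W x y) * d y i := by
            refine Finset.sum_le_sum fun y _ => Finset.sum_le_sum fun i _ => ?_
            refine mul_le_mul_of_nonneg_right ?_ (hd0 y i)
            exact helper_le_sup S (fun x => W x y) _ (Finset.mem_image_of_mem xi (mem_univ i))
        _ = ∑ y, ⨆ x ∈ S, W x y := by
            refine Finset.sum_congr rfl fun y _ => ?_
            rw [← Finset.mul_sum, hd1 y, mul_one]
    have hmemB : (∑ y, ⨆ x ∈ S, W x y) ∈ B := ⟨S, hSk, rfl⟩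
    calc (1 / (k:ℝ)) * ∑ i, ∑ x, ∑ y, e i x * W x y * d y i
        ≤ (1 / (k:ℝ)) * ∑ y, ⨆ x ∈ S, W x y :=
          mul_le_mul_of_nonneg_left hsum (by positivity)
      _ ≤ (1 / (k:ℝ)) * sSup B :=
          mul_le_mul_of_nonneg_left (le_csSup hBbdd hmemB) (by positivity)
  -- A is bounded above
  have hAbdd : BddAbove A := ⟨(1 / k) * sSup B, fun v hv => hkey v hv⟩
  refine le_antisymm (csSup_le hAne hkey) ?_
  -- reverse direction
  have hBne : B.Nonempty := ⟨_, ⟨{x0}, hcard1, rfl⟩⟩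
  have h0A : (0:ℝ) ≤ sSup A := by
    refine le_csSup_of_le hAbdd (hmemA {x0} ⟨x0, mem_singleton_self x0⟩ hcard1) ?_
    have := hsupnn {x0} ⟨x0, mem_singleton_self x0⟩
    positivity
  have hBsup : sSup B ≤ k * sSup A := by
    refine csSup_le hBne ?_
    rintro v ⟨S, hSk, rfl⟩
    rcases S.eq_empty_or_nonempty with rfl | hS
    · have : (∑ y : Y, ⨆ x ∈ (∅ : Finset X), W x y) = 0 := by simp
      rw [this]; positivity
    · have hw : ((1 / k) * ∑ y, ⨆ x ∈ S, W x y) ≤ sSup A :=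
        le_csSup hAbdd (hmemA S hS hSk)
      calc (∑ y, ⨆ x ∈ S, W x y)
          = k * ((1 / k) * ∑ y, ⨆ x ∈ S, W x y) := by
            field_simp
        _ ≤ k * sSup A := mul_le_mul_of_nonneg_left hw (le_of_lt hkpos)
  calc (1 / (k:ℝ)) * sSup B ≤ (1 / (k:ℝ)) * (k * sSup A) :=
        mul_le_mul_of_nonneg_left hBsup (by positivity)
    _ = sSup A := by field_simp
end

section
/- For any encoder-decoder pair (e,d) for k messages, the success probability (1/k)∑_{x,y,i} e(x|i)W(y|x)d(i|y) is at most (1/k)·max_{S⊆X, |S|≤k} ∑_y max_{x∈S} W(y|x). -/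
open Finset

/-- any encoder-decoder pair for `k` messages has success probability at most
`(1/k) · max_{S ⊆ X, |S| ≤ k} ∑_y max_{x∈S} W(y|x)`. -/
theorem success_le_combinatorial_max {X Y : Type*} [Fintype X] [Fintype Y] (W : X → Y → ℝ)
    (hW_nonneg : ∀ x y, 0 ≤ W x y)
    (k : ℕ) (hk : 1 ≤ k)
    (e : Fin k → X → ℝ) (d : Y → Fin k → ℝ)
    (he_nonneg : ∀ i x, 0 ≤ e i x) (he_sum : ∀ i, ∑ x, e i x = 1)
    (hd_nonneg : ∀ y i, 0 ≤ d y i) (hd_sum : ∀ y, ∑ i, d y i = 1) :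
    (1 / k) * ∑ i, ∑ x, ∑ y, e i x * W x y * d y i ≤
      (1 / k) * sSup { v : ℝ | ∃ S : Finset X, S.card ≤ k ∧ v = ∑ y, ⨆ x ∈ S, W x y } := by
  classical
  haveI : NeZero k := ⟨Nat.one_le_iff_ne_zero.mp hk⟩
  have hXne : Nonempty X := by
    by_contra h
    rw [not_nonempty_iff] at h
    have := he_sum ⟨0, hk⟩
    simp [Finset.sum_of_isEmpty] at this
  -- argmax choice
  have hchoice : ∀ i : Fin k, ∃ b ∈ (Finset.univ : Finset X),
      ∀ a ∈ (Finset.univ : Finset X),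
        (∑ y, W a y * d y i) ≤ (∑ y, W b y * d y i) := by
    intro i
    exact Finset.exists_max_image _ _ Finset.univ_nonempty
  choose xi _ hxi using hchoice
  set S : Finset X := Finset.univ.image xi with hS
  have hScard : S.card ≤ k := by
    calc S.card ≤ (Finset.univ : Finset (Fin k)).card := Finset.card_image_le
    _ = k := by simp
  -- W (xi i) y ≤ ⨆ x ∈ S, W x y
  have hbdd : ∀ y, BddAbove (Set.range fun x => ⨆ _ : x ∈ S, W x y) :=
    fun y => Set.Finite.bddAbove (Set.finite_range _)
  have hmaxle : ∀ i y, W (xi i) y ≤ ⨆ x ∈ S, W x y := by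
    intro i y
    have hmem : xi i ∈ S := Finset.mem_image_of_mem _ (Finset.mem_univ i)
    have : W (xi i) y = ⨆ _ : xi i ∈ S, W (xi i) y := (ciSup_pos (f := fun _ => W (xi i) y) hmem).symm
    rw [this]
    exact le_ciSup (hbdd y) (xi i)
  -- the maxes are nonneg
  have hsupnonneg : ∀ y (T : Finset X), 0 ≤ ⨆ x ∈ T, W x y := by
    intro y T
    exact Real.iSup_nonneg fun x => Real.iSup_nonneg fun _ => hW_nonneg x y
  -- success ≤ ∑_y ⨆ x∈S, W x y
  have hmain : (∑ i, ∑ x, ∑ y, e i x * W x y * d y i) ≤ ∑ y, ⨆ x ∈ S, W x y := by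
    have step1 : ∀ i : Fin k, (∑ x, ∑ y, e i x * W x y * d y i)
        ≤ ∑ y, W (xi i) y * d y i := by
      intro i
      calc ∑ x, ∑ y, e i x * W x y * d y i
          = ∑ x, e i x * ∑ y, W x y * d y i := by
            refine Finset.sum_congr rfl fun x _ => ?_
            rw [Finset.mul_sum]
            exact Finset.sum_congr rfl fun y _ => by ring
        _ ≤ ∑ x, e i x * ∑ y, W (xi i) y * d y i := by
            refine Finset.sum_le_sum fun x _ => ?_
            exact mul_le_mul_of_nonneg_left (hxi i x (Finset.mem_univ x)) (he_nonneg i x)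
        _ = (∑ x, e i x) * ∑ y, W (xi i) y * d y i := by rw [Finset.sum_mul]
        _ = ∑ y, W (xi i) y * d y i := by rw [he_sum i, one_mul]
    calc (∑ i, ∑ x, ∑ y, e i x * W x y * d y i)
        ≤ ∑ i, ∑ y, W (xi i) y * d y i := Finset.sum_le_sum fun i _ => step1 i
      _ ≤ ∑ i, ∑ y, (⨆ x ∈ S, W x y) * d y i := by
          refine Finset.sum_le_sum fun i _ => Finset.sum_le_sum fun y _ => ?_
          exact mul_le_mul_of_nonneg_right (hmaxle i y) (hd_nonneg y i)
      _ = ∑ y, ∑ i, (⨆ x ∈ S, W x y) * d y i := Finset.sum_comm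
      _ = ∑ y, ⨆ x ∈ S, W x y := by
          refine Finset.sum_congr rfl fun y _ => ?_
          rw [← Finset.mul_sum, hd_sum y, mul_one]
    -- done
  -- the set is bounded above and contains our value
  have hmemset : (∑ y, ⨆ x ∈ S, W x y) ∈
      { v : ℝ | ∃ S : Finset X, S.card ≤ k ∧ v = ∑ y, ⨆ x ∈ S, W x y } :=
    ⟨S, hScard, rfl⟩
  have hbddset : BddAbove { v : ℝ | ∃ S : Finset X, S.card ≤ k ∧ v = ∑ y, ⨆ x ∈ S, W x y } := by
    refine ⟨∑ y, ⨆ x, W x y, ?_⟩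
    rintro v ⟨T, _, rfl⟩
    refine Finset.sum_le_sum fun y _ => ?_
    have h0 : 0 ≤ ⨆ x, W x y := Real.iSup_nonneg fun x => hW_nonneg x y
    refine Real.iSup_le (fun x => Real.iSup_le (fun _ => ?_) h0) h0
    exact le_ciSup (Set.Finite.bddAbove (Set.finite_range fun x => W x y)) x
  have hle : (∑ i, ∑ x, ∑ y, e i x * W x y * d y i) ≤
      sSup { v : ℝ | ∃ S : Finset X, S.card ≤ k ∧ v = ∑ y, ⨆ x ∈ S, W x y } :=
    hmain.trans (le_csSup hbddset hmemset)
  have hkpos : (0:ℝ) ≤ 1 / (k:ℝ) := by positivity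
  exact mul_le_mul_of_nonneg_left hle hkpos
end

section
/- Let f : 2^X → ℝ≥0 be a monotone submodular function with f(∅) = 0, and let the greedy algorithm produce sets S_0 = ∅ ⊆ S_1 ⊆ ... where S_{ℓ+1} = S_ℓ ∪ {x_{ℓ+1}} with x_{ℓ+1} maximizing f(S_ℓ ∪ {x}). Then for any k and any S with |S| ≤ k, f(S_k) ≥ (1 − (1 − 1/k)^k) f(S) ≥ (1 − e^{−1}) f(S). -/
open Finset

/-- the greedy algorithm for a monotone submodular function `f` with `f ∅ = 0`
achieves a `(1 - (1 - 1/k)^k) ≥ (1 - e⁻¹)` approximation against any set of size at most `k`. -/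
theorem greedy_approx {X : Type*} [Fintype X] [DecidableEq X] (f : Finset X → ℝ)
    (hf_empty : f ∅ = 0)
    (hf_mono : ∀ S T : Finset X, S ⊆ T → f S ≤ f T)
    (hf_submod : ∀ (S T : Finset X) (u : X), S ⊆ T → u ∉ T →
      f (insert u T) - f T ≤ f (insert u S) - f S)
    (G : ℕ → Finset X) (hG0 : G 0 = ∅)
    (hGstep : ∀ ℓ : ℕ, ∃ x : X, G (ℓ + 1) = insert x (G ℓ) ∧
      ∀ x' : X, f (insert x' (G ℓ)) ≤ f (insert x (G ℓ)))
    (k : ℕ) (hk : 1 ≤ k) (S : Finset X) (hS : S.card ≤ k) :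
    (1 - (1 - 1 / (k : ℝ))^k) * f S ≤ f (G k) ∧
      (1 - Real.exp (-1)) * f S ≤ (1 - (1 - 1 / (k : ℝ))^k) * f S := by
  have hk1 : (1:ℝ) ≤ (k:ℝ) := by exact_mod_cast hk
  have hkpos : (0:ℝ) < (k:ℝ) := by linarith
  have hc : (0:ℝ) ≤ 1 - 1/(k:ℝ) := by
    have : 1/(k:ℝ) ≤ 1 := by
      rw [div_le_one hkpos]; exact hk1
    linarith
  have hfS : 0 ≤ f S := hf_empty ▸ hf_mono ∅ S (empty_subset S)
  -- marginal-gain sum bound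
  have sum_bound : ∀ (A T : Finset X),
      f (A ∪ T) ≤ f T + ∑ x ∈ A, (f (insert x T) - f T) := by
    intro A T
    induction A using Finset.induction_on with
    | empty => simp
    | @insert a A' ha ih =>
      rw [Finset.sum_insert ha]
      by_cases haT : a ∈ T
      · have h1 : insert a A' ∪ T = A' ∪ T := by
          rw [Finset.insert_union,
            Finset.insert_eq_self.mpr (Finset.mem_union_right _ haT)]
        have h2 : insert a T = T := Finset.insert_eq_self.mpr haT
        rw [h1, h2]
        linarith
      · have haU : a ∉ A' ∪ T := by simp [ha, haT]
        have hsub := hf_submod T (A' ∪ T) a Finset.subset_union_right haU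
        have h1 : insert a A' ∪ T = insert a (A' ∪ T) := by
          rw [Finset.insert_union]
        rw [h1]
        linarith
  -- one greedy step
  have step : ∀ ℓ, f S - f (G (ℓ+1)) ≤ (1 - 1/(k:ℝ)) * (f S - f (G ℓ)) := by
    intro ℓ
    obtain ⟨x, hx1, hx2⟩ := hGstep ℓ
    set g := f (G (ℓ+1)) - f (G ℓ) with hg
    have hgain : ∀ y, f (insert y (G ℓ)) - f (G ℓ) ≤ g := by
      intro y
      have := hx2 y
      rw [hg, hx1]
      linarith
    have hg0 : 0 ≤ g := by
      have := hf_mono (G ℓ) (G (ℓ+1)) (by rw [hx1]; exact Finset.subset_insert x (G ℓ))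
      rw [hg]; linarith
    have h1 : f S ≤ f (S ∪ G ℓ) := hf_mono _ _ Finset.subset_union_left
    have h2 := sum_bound S (G ℓ)
    have h3 : ∑ y ∈ S, (f (insert y (G ℓ)) - f (G ℓ)) ≤ S.card • g :=
      Finset.sum_le_card_nsmul S _ g (fun y _ => hgain y)
    rw [nsmul_eq_mul] at h3
    have h4 : (S.card : ℝ) * g ≤ (k:ℝ) * g :=
      mul_le_mul_of_nonneg_right (by exact_mod_cast hS) hg0
    have h5 : f S - f (G ℓ) ≤ (k:ℝ) * g := by linarith
    have h6 : (1/(k:ℝ)) * (f S - f (G ℓ)) ≤ g := by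
      rw [one_div, inv_mul_le_iff₀ hkpos]
      exact h5
    have hexp : (1 - 1/(k:ℝ)) * (f S - f (G ℓ))
        = (f S - f (G ℓ)) - (1/(k:ℝ)) * (f S - f (G ℓ)) := by ring
    have hfG : f (G (ℓ+1)) = f (G ℓ) + g := by rw [hg]; ring
    rw [hexp]
    linarith
  -- induction
  have main : ∀ ℓ, f S - f (G ℓ) ≤ (1 - 1/(k:ℝ))^ℓ * f S := by
    intro ℓ
    induction ℓ with
    | zero => simp [hG0, hf_empty]
    | succ n ih =>
      calc f S - f (G (n+1)) ≤ (1 - 1/(k:ℝ)) * (f S - f (G n)) := step n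
        _ ≤ (1 - 1/(k:ℝ)) * ((1 - 1/(k:ℝ))^n * f S) :=
            mul_le_mul_of_nonneg_left ih hc
        _ = (1 - 1/(k:ℝ))^(n+1) * f S := by ring
  constructor
  · have := main k
    nlinarith [this]
  · have hle : (1 - 1/(k:ℝ))^k ≤ Real.exp (-1) := by
      have h1 : (1 - 1/(k:ℝ)) ≤ Real.exp (-(1/(k:ℝ))) := by
        have := Real.add_one_le_exp (-(1/(k:ℝ)))
        linarith
      have h2 : (1 - 1/(k:ℝ))^k ≤ (Real.exp (-(1/(k:ℝ))))^k :=
        pow_le_pow_left₀ hc h1 k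
      have h3 : (Real.exp (-(1/(k:ℝ))))^k = Real.exp ((k:ℝ) * -(1/(k:ℝ))) := by
        rw [← Real.exp_nat_mul]
      have h4 : (k:ℝ) * -(1/(k:ℝ)) = -1 := by
        field_simp
      rw [h3, h4] at h2
      exact h2
    exact mul_le_mul_of_nonneg_right (by linarith) hfS
end

section
/- Fractional greedy gap lemma: Let W be a channel, S ⊆ X, and p ∈ [0,1]^X with ∑_x p_x = k. Define f_W(p) as the maximum of ∑_{x,y} W(y|x) r_{x,y} over r with 0 ≤ r_{x,y} ≤ p_x and ∑_x r_{x,y} ≤ 1 for all y. Then f_W(p) ≤ f_W(S) + k·(max_{x∈X} f_W(S ∪ {x}) − f_W(S)), where f_W(S) = ∑_y max_{x∈S} W(y|x). -/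
open Finset

/-- fractional greedy gap lemma. For a channel `W`, a set `S ⊆ X` and a
fractional vector `p ∈ [0,1]^X` with `∑_x p_x = k`, the LP value `f_W(p)` satisfies
`f_W(p) ≤ f_W(S) + k · (max_{x∈X} f_W(S ∪ {x}) − f_W(S))`. -/
theorem fractional_greedy_gap {X Y : Type*} [Fintype X] [DecidableEq X] [Fintype Y]
    [Nonempty X] (W : X → Y → ℝ) (hW_nonneg : ∀ x y, 0 ≤ W x y)
    (k : ℝ) (hk : 0 < k) (S : Finset X)
    (p : X → ℝ) (hp0 : ∀ x, 0 ≤ p x) (hp1 : ∀ x, p x ≤ 1) (hpsum : ∑ x, p x = k) :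
    sSup { v : ℝ | ∃ r : X → Y → ℝ,
        (∀ x y, 0 ≤ r x y) ∧ (∀ x y, r x y ≤ p x) ∧ (∀ y, ∑ x, r x y ≤ 1) ∧
        v = ∑ x, ∑ y, W x y * r x y } ≤
      (∑ y, ⨆ x ∈ S, W x y) +
        k * ((⨆ x : X, ∑ y, ⨆ x' ∈ insert x S, W x' y) - ∑ y, ⨆ x ∈ S, W x y) := by
  classical
  -- basic facts about finite sups
  have hsupnn : ∀ (t : Finset X) (y : Y), 0 ≤ ⨆ x ∈ t, W x y := fun t y =>
    Real.iSup_nonneg fun x => Real.iSup_nonneg fun _ => hW_nonneg x y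
  have hle : ∀ (t : Finset X) (y : Y) (x : X), x ∈ t → W x y ≤ ⨆ x' ∈ t, W x' y := by
    intro t y x hx
    refine le_ciSup_of_le (Set.Finite.bddAbove (Set.finite_range _)) x ?_
    rw [ciSup_pos hx]
  have hAnn : ∀ y, 0 ≤ ⨆ x ∈ S, W x y := fun y => hsupnn S y
  have hWB : ∀ x y, W x y ≤ ⨆ x' ∈ insert x S, W x' y := fun x y =>
    hle _ y x (mem_insert_self x S)
  have hAB : ∀ x y, (⨆ x' ∈ S, W x' y) ≤ ⨆ x' ∈ insert x S, W x' y := by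
    intro x y
    refine Real.iSup_le (fun x' => Real.iSup_le (fun hx' => ?_) (hsupnn _ y)) (hsupnn _ y)
    exact hle _ y x' (mem_insert_of_mem hx')
  set g : ℝ := ∑ y, ⨆ x ∈ S, W x y with hg
  set M' : ℝ := ⨆ x : X, ∑ y, ⨆ x' ∈ insert x S, W x' y with hM'
  have hgnn : 0 ≤ g := Finset.sum_nonneg fun y _ => hAnn y
  have hgx : ∀ x, (∑ y, ⨆ x' ∈ insert x S, W x' y) ≤ M' := by
    intro x
    rw [hM']
    exact le_ciSup (f := fun x : X => ∑ y, ⨆ x' ∈ insert x S, W x' y) (Set.Finite.bddAbove (Set.finite_range _)) x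
  have hggx : ∀ x, g ≤ ∑ y, ⨆ x' ∈ insert x S, W x' y := fun x =>
    Finset.sum_le_sum fun y _ => hAB x y
  have hgM : g ≤ M' := (hggx (Classical.arbitrary X)).trans (hgx _)
  refine Real.sSup_le ?_ (by nlinarith)
  rintro v ⟨r, hr0, hrp, hr1, rfl⟩
  have key : ∀ x y, W x y * r x y ≤
      (⨆ x' ∈ S, W x' y) * r x y + ((⨆ x' ∈ insert x S, W x' y) - ⨆ x' ∈ S, W x' y) * p x := by
    intro x y
    rcases le_total (W x y) (⨆ x' ∈ S, W x' y) with h | h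
    · have h1 : W x y * r x y ≤ (⨆ x' ∈ S, W x' y) * r x y :=
        mul_le_mul_of_nonneg_right h (hr0 x y)
      nlinarith [hAB x y, hp0 x]
    · have h2 : (W x y - ⨆ x' ∈ S, W x' y) * r x y ≤
          ((⨆ x' ∈ insert x S, W x' y) - ⨆ x' ∈ S, W x' y) * p x :=
        mul_le_mul (by linarith [hWB x y]) (hrp x y) (hr0 x y) (by linarith [hAB x y])
      nlinarith
  have t1 : ∑ x, ∑ y, (⨆ x' ∈ S, W x' y) * r x y ≤ g := by
    rw [Finset.sum_comm]
    calc ∑ y, ∑ x, (⨆ x' ∈ S, W x' y) * r x y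
        = ∑ y, (⨆ x' ∈ S, W x' y) * ∑ x, r x y := by
          simp [Finset.mul_sum]
      _ ≤ ∑ y, (⨆ x' ∈ S, W x' y) * 1 :=
          Finset.sum_le_sum fun y _ => mul_le_mul_of_nonneg_left (hr1 y) (hAnn y)
      _ = g := by simp [hg]
  have t2 : ∑ x, ∑ y, ((⨆ x' ∈ insert x S, W x' y) - ⨆ x' ∈ S, W x' y) * p x
      ≤ k * (M' - g) := by
    calc ∑ x, ∑ y, ((⨆ x' ∈ insert x S, W x' y) - ⨆ x' ∈ S, W x' y) * p x
        = ∑ x, ((∑ y, ⨆ x' ∈ insert x S, W x' y) - g) * p x := by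
          refine Finset.sum_congr rfl fun x _ => ?_
          rw [← Finset.sum_mul, Finset.sum_sub_distrib]
      _ ≤ ∑ x, (M' - g) * p x :=
          Finset.sum_le_sum fun x _ =>
            mul_le_mul_of_nonneg_right (by linarith [hgx x]) (hp0 x)
      _ = (M' - g) * k := by rw [← Finset.mul_sum, hpsum]
      _ = k * (M' - g) := mul_comm _ _
  calc ∑ x, ∑ y, W x y * r x y
      ≤ ∑ x, ∑ y, ((⨆ x' ∈ S, W x' y) * r x y
          + ((⨆ x' ∈ insert x S, W x' y) - ⨆ x' ∈ S, W x' y) * p x) :=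
        Finset.sum_le_sum fun x _ => Finset.sum_le_sum fun y _ => key x y
    _ = (∑ x, ∑ y, (⨆ x' ∈ S, W x' y) * r x y)
          + ∑ x, ∑ y, ((⨆ x' ∈ insert x S, W x' y) - ⨆ x' ∈ S, W x' y) * p x := by
        rw [← Finset.sum_add_distrib]
        exact Finset.sum_congr rfl fun x _ => Finset.sum_add_distrib
    _ ≤ g + k * (M' - g) := add_le_add t1 t2
end

section
/- Greedy vs. LP relaxation: with greedy sets S_ℓ for f_W and any p ∈ [0,1]^X with ∑_x p_x = k, we have for all ℓ: f_W(p) − f_W(S_ℓ) ≤ (1 − 1/k)^ℓ · f_W(p); equivalently f_W(S_ℓ) ≥ (1 − (1−1/k)^ℓ) f_W(p). -/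
open Finset

section Aux

variable {X Y : Type*} [Fintype X] [DecidableEq X] [Fintype Y]

lemma gvl_g_nonneg (W : X → Y → ℝ) (hW : ∀ x y, 0 ≤ W x y) (S : Finset X) (y : Y) :
    0 ≤ ⨆ z ∈ S, W z y :=
  Real.iSup_nonneg fun z => Real.iSup_nonneg fun _ => hW z y

lemma gvl_le_g (W : X → Y → ℝ) {S : Finset X} {z : X} (hz : z ∈ S) (y : Y) :
    W z y ≤ ⨆ z ∈ S, W z y := by
  have h1 : W z y ≤ ⨆ _ : z ∈ S, W z y :=
    le_ciSup (f := fun _ : z ∈ S => W z y) (Set.Finite.bddAbove (Set.finite_range _)) hz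
  exact h1.trans (le_ciSup (f := fun w => ⨆ _ : w ∈ S, W w y)
    (Set.Finite.bddAbove (Set.finite_range _)) z)

lemma gvl_g_le (W : X → Y → ℝ) (S : Finset X) (y : Y) {c : ℝ} (hc : 0 ≤ c)
    (h : ∀ z ∈ S, W z y ≤ c) : (⨆ z ∈ S, W z y) ≤ c :=
  Real.iSup_le (fun z => Real.iSup_le (fun hz => h z hz) hc) hc

lemma gvl_g_empty (W : X → Y → ℝ) (y : Y) : (⨆ z ∈ (∅ : Finset X), W z y) = 0 :=
  le_antisymm (gvl_g_le W ∅ y le_rfl (fun z hz => absurd hz (notMem_empty z)))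
    (Real.iSup_nonneg fun z => Real.iSup_nonneg fun hz => absurd hz (notMem_empty z))

lemma gvl_g_mono (W : X → Y → ℝ) (hW : ∀ x y, 0 ≤ W x y) {S T : Finset X} (hST : S ⊆ T)
    (y : Y) : (⨆ z ∈ S, W z y) ≤ ⨆ z ∈ T, W z y :=
  gvl_g_le W S y (gvl_g_nonneg W hW T y) (fun z hz => gvl_le_g W (hST hz) y)

/-- Key submodularity/LP bound: the LP value is at most `f S` plus the `p`-weighted sum of
marginal gains. -/
lemma gvl_key (W : X → Y → ℝ) (hW : ∀ x y, 0 ≤ W x y)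
    (p : X → ℝ) (hp0 : ∀ x, 0 ≤ p x) (S : Finset X) :
    sSup { v : ℝ | ∃ r : X → Y → ℝ,
        (∀ x y, 0 ≤ r x y) ∧ (∀ x y, r x y ≤ p x) ∧ (∀ y, ∑ x, r x y ≤ 1) ∧
        v = ∑ x, ∑ y, W x y * r x y } ≤
      (∑ y, ⨆ z ∈ S, W z y) +
        ∑ x, p x * ((∑ y, ⨆ z ∈ insert x S, W z y) - ∑ y, ⨆ z ∈ S, W z y) := by
  have hfS : 0 ≤ ∑ y, ⨆ z ∈ S, W z y :=
    Finset.sum_nonneg fun y _ => gvl_g_nonneg W hW S y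
  have hmarg : ∀ x : X, 0 ≤ (∑ y, ⨆ z ∈ insert x S, W z y) - ∑ y, ⨆ z ∈ S, W z y := by
    intro x
    have := Finset.sum_le_sum (f := fun y => ⨆ z ∈ S, W z y)
      (g := fun y => ⨆ z ∈ insert x S, W z y) (s := Finset.univ)
      (fun y _ => gvl_g_mono W hW (Finset.subset_insert x S) y)
    linarith
  have hbound : 0 ≤ (∑ y, ⨆ z ∈ S, W z y) +
      ∑ x, p x * ((∑ y, ⨆ z ∈ insert x S, W z y) - ∑ y, ⨆ z ∈ S, W z y) := by
    have : 0 ≤ ∑ x, p x * ((∑ y, ⨆ z ∈ insert x S, W z y) - ∑ y, ⨆ z ∈ S, W z y) :=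
      Finset.sum_nonneg fun x _ => mul_nonneg (hp0 x) (hmarg x)
    linarith
  refine Real.sSup_le ?_ hbound
  rintro v ⟨r, hr0, hrp, hr1, rfl⟩
  have hterm : ∀ x y, W x y * r x y ≤ (⨆ z ∈ S, W z y) * r x y +
      ((⨆ z ∈ insert x S, W z y) - (⨆ z ∈ S, W z y)) * p x := by
    intro x y
    have h1 : W x y ≤ ⨆ z ∈ insert x S, W z y := gvl_le_g W (Finset.mem_insert_self x S) y
    have h2 : (⨆ z ∈ S, W z y) ≤ ⨆ z ∈ insert x S, W z y :=
      gvl_g_mono W hW (Finset.subset_insert x S) y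
    have h3 : r x y ≤ p x := hrp x y
    have h4 : 0 ≤ r x y := hr0 x y
    nlinarith [mul_le_mul_of_nonneg_right h1 h4,
      mul_le_mul_of_nonneg_left h3 (sub_nonneg.2 h2)]
  calc ∑ x, ∑ y, W x y * r x y
      ≤ ∑ x, ∑ y, ((⨆ z ∈ S, W z y) * r x y +
          ((⨆ z ∈ insert x S, W z y) - (⨆ z ∈ S, W z y)) * p x) :=
        Finset.sum_le_sum fun x _ => Finset.sum_le_sum fun y _ => hterm x y
    _ = (∑ y, (⨆ z ∈ S, W z y) * ∑ x, r x y) +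
          ∑ x, p x * ((∑ y, ⨆ z ∈ insert x S, W z y) - ∑ y, ⨆ z ∈ S, W z y) := by
        simp only [Finset.sum_add_distrib]
        congr 1
        · rw [Finset.sum_comm]
          exact Finset.sum_congr rfl fun y _ => (Finset.mul_sum _ _ _).symm
        · refine Finset.sum_congr rfl fun x _ => ?_
          rw [← Finset.sum_sub_distrib, Finset.mul_sum]
          exact Finset.sum_congr rfl fun y _ => mul_comm _ _
    _ ≤ (∑ y, ⨆ z ∈ S, W z y) +
          ∑ x, p x * ((∑ y, ⨆ z ∈ insert x S, W z y) - ∑ y, ⨆ z ∈ S, W z y) := by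
        have h7 : (∑ y, (⨆ z ∈ S, W z y) * ∑ x, r x y) ≤ ∑ y, ⨆ z ∈ S, W z y := by
          refine Finset.sum_le_sum fun y _ => ?_
          have := mul_le_mul_of_nonneg_left (hr1 y) (gvl_g_nonneg W hW S y)
          simpa using this
        linarith

end Aux

/-- greedy vs. the LP relaxation. With greedy sets `S_ℓ` for `f_W` and any
`p ∈ [0,1]^X` with `∑_x p_x = k`, for all `ℓ`:
`f_W(p) − f_W(S_ℓ) ≤ (1 − 1/k)^ℓ · f_W(p)`. -/
theorem greedy_vs_lp {X Y : Type*} [Fintype X] [DecidableEq X] [Fintype Y]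
    (W : X → Y → ℝ) (hW_nonneg : ∀ x y, 0 ≤ W x y)
    (k : ℕ) (hk : 1 ≤ k)
    (p : X → ℝ) (hp0 : ∀ x, 0 ≤ p x) (hp1 : ∀ x, p x ≤ 1) (hpsum : ∑ x, p x = k)
    (G : ℕ → Finset X) (hG0 : G 0 = ∅)
    (hGstep : ∀ ℓ : ℕ, ∃ x : X, G (ℓ + 1) = insert x (G ℓ) ∧
      ∀ x' : X, (∑ y, ⨆ z ∈ insert x' (G ℓ), W z y) ≤ ∑ y, ⨆ z ∈ insert x (G ℓ), W z y)
    (fWp : ℝ)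
    (hfWp : fWp = sSup { v : ℝ | ∃ r : X → Y → ℝ,
        (∀ x y, 0 ≤ r x y) ∧ (∀ x y, r x y ≤ p x) ∧ (∀ y, ∑ x, r x y ≤ 1) ∧
        v = ∑ x, ∑ y, W x y * r x y }) :
    ∀ ℓ : ℕ, fWp - (∑ y, ⨆ x ∈ G ℓ, W x y) ≤ (1 - 1 / (k : ℝ))^ℓ * fWp ∧
      (1 - (1 - 1 / (k : ℝ))^ℓ) * fWp ≤ ∑ y, ⨆ x ∈ G ℓ, W x y := by
  have hk0 : (0:ℝ) < k := by exact_mod_cast Nat.lt_of_lt_of_le Nat.zero_lt_one hk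
  have hk1 : (1:ℝ) ≤ k := by exact_mod_cast hk
  have hc0 : (0:ℝ) ≤ 1 - 1 / (k : ℝ) := by
    have : 1 / (k:ℝ) ≤ 1 := by
      rw [div_le_one hk0]; exact hk1
    linarith
  have main : ∀ ℓ : ℕ, fWp - (∑ y, ⨆ x ∈ G ℓ, W x y) ≤ (1 - 1 / (k : ℝ))^ℓ * fWp := by
    intro ℓ
    induction ℓ with
    | zero =>
      rw [hG0]
      have : (∑ y, ⨆ x ∈ (∅ : Finset X), W x y) = 0 := by
        apply Finset.sum_eq_zero
        intro y _
        exact gvl_g_empty W y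
      rw [this, pow_zero, one_mul]
      linarith
    | succ ℓ ih =>
      obtain ⟨x, hx1, hx2⟩ := hGstep ℓ
      set fL := ∑ y, ⨆ z ∈ G ℓ, W z y with hfL
      set fL1 := ∑ y, ⨆ z ∈ G (ℓ + 1), W z y with hfL1
      have hkey : fWp ≤ fL + ∑ x', p x' *
          ((∑ y, ⨆ z ∈ insert x' (G ℓ), W z y) - fL) := by
        rw [hfWp]
        exact gvl_key W hW_nonneg p hp0 (G ℓ)
      have hstep : ∀ x' : X, (∑ y, ⨆ z ∈ insert x' (G ℓ), W z y) ≤ fL1 := by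
        intro x'
        rw [hfL1, hx1]
        exact hx2 x'
      have hsum_le : ∑ x', p x' * ((∑ y, ⨆ z ∈ insert x' (G ℓ), W z y) - fL) ≤
          ∑ x', p x' * (fL1 - fL) := by
        apply Finset.sum_le_sum
        intro x' _
        apply mul_le_mul_of_nonneg_left _ (hp0 x')
        have := hstep x'
        linarith
      have hsum_eq : ∑ x' : X, p x' * (fL1 - fL) = (k : ℝ) * (fL1 - fL) := by
        rw [← Finset.sum_mul, hpsum]
      have hmain : fWp ≤ fL + (k : ℝ) * (fL1 - fL) := by
        rw [← hsum_eq]; linarith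
      -- fWp - fL1 ≤ (1 - 1/k) * (fWp - fL)
      have hcontract : fWp - fL1 ≤ (1 - 1 / (k:ℝ)) * (fWp - fL) := by
        have hinv : 0 < 1 / (k:ℝ) := by positivity
        have h5 : (1/(k:ℝ)) * (fWp - fL) ≤ (1/(k:ℝ)) * ((k:ℝ) * (fL1 - fL)) := by
          apply mul_le_mul_of_nonneg_left _ (le_of_lt hinv)
          linarith
        have h6 : (1/(k:ℝ)) * ((k:ℝ) * (fL1 - fL)) = fL1 - fL := by
          field_simp
        rw [h6] at h5
        nlinarith
      calc fWp - fL1 ≤ (1 - 1 / (k:ℝ)) * (fWp - fL) := hcontract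
        _ ≤ (1 - 1 / (k:ℝ)) * ((1 - 1 / (k : ℝ))^ℓ * fWp) :=
            mul_le_mul_of_nonneg_left ih hc0
        _ = (1 - 1 / (k : ℝ))^(ℓ+1) * fWp := by ring
  intro ℓ
  refine ⟨main ℓ, ?_⟩
  have := main ℓ
  nlinarith [this]
end

section
/- Non-signaling advantage bound: for any channel W and integers 1 ≤ ℓ, k ≤ |X|, S(W,ℓ) ≥ (k/ℓ)(1 − (1 − 1/k)^ℓ) · S^NS(W,k), where S^NS(W,k) is the value of the LP relaxation. In particular, with ℓ = k, S(W,k) ≥ (1 − (1−1/k)^k) S^NS(W,k) ≥ (1 − e^{−1}) S^NS(W,k). -/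
open Finset

/-- Maximum success probability `S(W,k) = (1/k) max_{S ⊆ X, |S| ≤ k} ∑_y max_{x∈S} W(y|x)`. -/
noncomputable def Schan {X Y : Type*} [Fintype X] [Fintype Y] (W : X → Y → ℝ) (k : ℕ) : ℝ :=
  (1 / k) * sSup { v : ℝ | ∃ S : Finset X, S.card ≤ k ∧ v = ∑ y, ⨆ x ∈ S, W x y }

/-- Non-signaling (LP relaxation) value `S^NS(W,k)`. -/
noncomputable def SchanNS {X Y : Type*} [Fintype X] [Fintype Y] (W : X → Y → ℝ) (k : ℕ) : ℝ :=
  sSup { v : ℝ | ∃ r : X → Y → ℝ, ∃ p : X → ℝ,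
    (∀ x y, 0 ≤ r x y) ∧ (∀ x y, r x y ≤ p x) ∧ (∀ x, p x ≤ 1) ∧
    (∀ y, ∑ x, r x y ≤ 1) ∧ (∑ x, p x = k) ∧
    v = (1 / k) * ∑ x, ∑ y, W x y * r x y }


lemma analytic_key (k ℓ : ℕ) (hk : 1 ≤ k) (hℓ : 1 ≤ ℓ) (s R : ℝ)
    (hs0 : 0 ≤ s) (hs1 : s ≤ 1) (hR0 : 0 ≤ R) (hR1 : R ≤ 1)
    (hRks : R ≤ (k:ℝ) * (1 - s)) :
    (1 - (1 - 1/(k:ℝ))^ℓ) * R ≤ 1 - s^ℓ := by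
  have hk0 : (0:ℝ) < k := by exact_mod_cast hk
  have hki : (0:ℝ) < 1/(k:ℝ) := by positivity
  have hki1 : 1/(k:ℝ) ≤ 1 := by
    rw [div_le_one hk0]; exact_mod_cast hk
  have hb0 : (0:ℝ) ≤ 1 - 1/(k:ℝ) := by linarith
  have hb1 : (1 - 1/(k:ℝ))^ℓ ≤ 1 := pow_le_one₀ hb0 (by linarith)
  have hc0 : 0 ≤ 1 - (1 - 1/(k:ℝ))^ℓ := by linarith
  rcases le_total 1 ((k:ℝ) * (1 - s)) with h | h
  · have hs' : s ≤ 1 - 1/(k:ℝ) := by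
      have : 1/(k:ℝ) ≤ 1 - s := by rw [div_le_iff₀ hk0]; nlinarith
      linarith
    have hp := pow_le_pow_left₀ hs0 hs' ℓ
    nlinarith
  · set t : ℝ := 1 - s with ht
    have ht0 : 0 ≤ t := by linarith
    have hkt0 : 0 ≤ (k:ℝ) * t := by positivity
    have hkt1 : (k:ℝ) * t ≤ 1 := h
    have hconv := (convexOn_pow (𝕜 := ℝ) ℓ).2 (Set.mem_Ici.mpr hb0) (Set.mem_Ici.mpr (zero_le_one))
      hkt0 (by linarith : (0:ℝ) ≤ 1 - (k:ℝ)*t) (by ring)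
    simp only [smul_eq_mul] at hconv
    have heq : (k:ℝ)*t * (1 - 1/(k:ℝ)) + (1 - (k:ℝ)*t) * 1 = s := by
      field_simp
      ring
    rw [heq, one_pow] at hconv
    nlinarith [mul_le_mul_of_nonneg_left hRks hc0]

lemma key_lemma {X : Type*} [Fintype X] [Nonempty X] (w q r : X → ℝ) (k ℓ : ℕ)
    (hk : 1 ≤ k) (hℓ : 1 ≤ ℓ)
    (hw : ∀ x, 0 ≤ w x) (hq : ∀ x, 0 ≤ q x) (hq1 : ∑ x, q x = 1)
    (hr0 : ∀ x, 0 ≤ r x) (hrq : ∀ x, r x ≤ (k:ℝ) * q x) (hr1 : ∑ x, r x ≤ 1) :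
    (1 - (1 - 1/(k:ℝ))^ℓ) * ∑ x, w x * r x ≤
      ∑ f : Fin ℓ → X, (∏ i, q (f i)) * ⨆ i, w (f i) := by
  classical
  haveI : Nonempty (Fin ℓ) := Fin.pos_iff_nonempty.mp (by omega)
  set n := Fintype.card X with hn
  have hn1 : 0 < n := Fintype.card_pos
  set c₀ : ℝ := 1 - (1 - 1/(k:ℝ))^ℓ with hc₀
  -- sorted enumeration
  set e₀ : Fin n ≃ X := (Fintype.equivFin X).symm with he₀
  set σ : Equiv.Perm (Fin n) := Tuple.sort (fun i => w (e₀ i)) with hσ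
  set e : Fin n ≃ X := σ.trans e₀ with he
  have ha : Monotone (fun i : Fin n => w (e i)) := Tuple.monotone_sort (fun i => w (e₀ i))
  set idx : X → ℕ := fun x => ((e.symm x : Fin n) : ℕ) with hidx
  have hidxlt : ∀ x, idx x < n := fun x => (e.symm x).isLt
  set av : ℕ → ℝ := fun j => w (e ⟨min j (n-1), by omega⟩) with hav
  have havmono : ∀ i j : ℕ, i ≤ j → av i ≤ av j := by
    intro i j hij
    exact ha (by simp only [Fin.mk_le_mk]; omega)
  set A : ℕ → ℝ := fun j => if j = 0 then 0 else av (j-1) with hA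
  set d : ℕ → ℝ := fun j => A (j+1) - A j with hd
  have hd0 : ∀ j, 0 ≤ d j := by
    intro j
    cases j with
    | zero => simpa [hd, hA] using hw _
    | succ m =>
        have : av m ≤ av (m+1) := havmono m (m+1) (Nat.le_succ m)
        simp only [hd, hA]
        simp only [Nat.succ_ne_zero, if_false, Nat.add_sub_cancel]
        simpa using this
  have htel : ∀ m, m < n → ∑ j ∈ range n, (if j ≤ m then d j else 0) = av m := by
    intro m hm
    rw [← Finset.sum_filter]
    have hfe : (range n).filter (fun j => j ≤ m) = range (m+1) := by
      ext j; simp only [mem_filter, mem_range]; omega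
    rw [hfe]
    have := Finset.sum_range_sub A (m+1)
    simp only [hd]
    rw [this]
    simp [hA]
  have hwx : ∀ x, av (idx x) = w x := by
    intro x
    have hlt := hidxlt x
    have hfin : (⟨min (idx x) (n-1), by omega⟩ : Fin n) = e.symm x := by
      apply Fin.ext; simp only [hidx]; omega
    simp only [hav]
    rw [hfin, Equiv.apply_symm_apply]
  have htelx : ∀ x, ∑ j ∈ range n, (if j ≤ idx x then d j else 0) = w x :=
    fun x => (htel _ (hidxlt x)).trans (hwx x)
  -- Abel on LHS
  set Rt : ℕ → ℝ := fun j => ∑ x ∈ univ.filter (fun x => j ≤ idx x), r x with hRt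
  set sQ : ℕ → ℝ := fun j => ∑ x ∈ univ.filter (fun x => idx x < j), q x with hsQ
  have abelL : ∑ x, w x * r x = ∑ j ∈ range n, d j * Rt j := by
    calc ∑ x, w x * r x
        = ∑ x, ∑ j ∈ range n, (if j ≤ idx x then d j else 0) * r x := by
          refine Finset.sum_congr rfl fun x _ => ?_
          rw [← Finset.sum_mul, htelx x]
      _ = ∑ j ∈ range n, ∑ x, (if j ≤ idx x then d j else 0) * r x := Finset.sum_comm
      _ = ∑ j ∈ range n, d j * Rt j := by
          refine Finset.sum_congr rfl fun j _ => ?_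
          rw [hRt, Finset.mul_sum, Finset.sum_filter]
          refine Finset.sum_congr rfl fun x _ => ?_
          split <;> simp
  -- total weight is 1
  have htot : ∑ f : Fin ℓ → X, ∏ i, q (f i) = 1 := by
    have h := Finset.prod_univ_sum (fun _ : Fin ℓ => (univ : Finset X)) (fun _ x => q x)
    rw [Fintype.piFinset_univ] at h
    rw [← h]
    simp [hq1]
  -- probability that all samples have idx < j
  have hPj : ∀ j, ∑ f ∈ univ.filter (fun f : Fin ℓ → X => ∀ i, idx (f i) < j), ∏ i, q (f i)
      = (sQ j)^ℓ := by
    intro j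
    have hset : univ.filter (fun f : Fin ℓ → X => ∀ i, idx (f i) < j)
        = Fintype.piFinset (fun _ : Fin ℓ => univ.filter (fun x => idx x < j)) := by
      ext f; simp [Fintype.mem_piFinset]
    rw [hset, ← Finset.prod_univ_sum]
    simp [hsQ, Finset.prod_const]
  -- per-f lower bound on the max
  have hEf : ∀ f : Fin ℓ → X,
      ∑ j ∈ range n, (if ∃ i, j ≤ idx (f i) then d j else 0) ≤ ⨆ i, w (f i) := by
    intro f
    obtain ⟨i₀, -, hi₀⟩ := Finset.exists_mem_eq_sup' (Finset.univ_nonempty (α := Fin ℓ))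
      (fun i => idx (f i))
    have hcond : ∀ j, (∃ i, j ≤ idx (f i)) ↔ j ≤ idx (f i₀) := by
      intro j
      constructor
      · rintro ⟨i, hi⟩
        refine hi.trans ?_
        rw [← hi₀]
        exact Finset.le_sup' (fun i => idx (f i)) (mem_univ i)
      · exact fun h => ⟨i₀, h⟩
    calc ∑ j ∈ range n, (if ∃ i, j ≤ idx (f i) then d j else 0)
        = ∑ j ∈ range n, (if j ≤ idx (f i₀) then d j else 0) := by
          refine Finset.sum_congr rfl fun j _ => ?_
          simp only [hcond j]
      _ = w (f i₀) := htelx _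
      _ ≤ ⨆ i, w (f i) := le_ciSup (f := fun i => w (f i)) (Finite.bddAbove_range _) i₀
  -- swap sums
  have hswap : ∑ f : Fin ℓ → X, (∏ i, q (f i)) * ∑ j ∈ range n, (if ∃ i, j ≤ idx (f i) then d j else 0)
      = ∑ j ∈ range n, d j * (1 - (sQ j)^ℓ) := by
    calc ∑ f : Fin ℓ → X, (∏ i, q (f i)) * ∑ j ∈ range n, (if ∃ i, j ≤ idx (f i) then d j else 0)
        = ∑ f : Fin ℓ → X, ∑ j ∈ range n, (∏ i, q (f i)) * (if ∃ i, j ≤ idx (f i) then d j else 0) := by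
          refine Finset.sum_congr rfl fun f _ => Finset.mul_sum _ _ _
      _ = ∑ j ∈ range n, ∑ f : Fin ℓ → X, (∏ i, q (f i)) * (if ∃ i, j ≤ idx (f i) then d j else 0) :=
          Finset.sum_comm
      _ = ∑ j ∈ range n, d j * (1 - (sQ j)^ℓ) := by
          refine Finset.sum_congr rfl fun j _ => ?_
          have hsplit := Finset.sum_filter_add_sum_filter_not (univ : Finset (Fin ℓ → X))
            (fun f => ∃ i, j ≤ idx (f i)) (fun f => ∏ i, q (f i))
          rw [htot] at hsplit
          have hnotf : (univ : Finset (Fin ℓ → X)).filter (fun f => ¬ ∃ i, j ≤ idx (f i))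
              = (univ : Finset (Fin ℓ → X)).filter (fun f => ∀ i, idx (f i) < j) := by
            apply Finset.filter_congr
            intro f _
            simp [not_exists, not_le]
          have h1 : ∑ f ∈ univ.filter (fun f : Fin ℓ → X => ∃ i, j ≤ idx (f i)), ∏ i, q (f i)
              = 1 - (sQ j)^ℓ := by
            rw [hnotf, hPj] at hsplit; linarith
          calc ∑ f : Fin ℓ → X, (∏ i, q (f i)) * (if ∃ i, j ≤ idx (f i) then d j else 0)
              = ∑ f : Fin ℓ → X, (if ∃ i, j ≤ idx (f i) then (∏ i, q (f i)) * d j else 0) := by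
                refine Finset.sum_congr rfl fun f _ => ?_
                split <;> simp
            _ = ∑ f ∈ univ.filter (fun f : Fin ℓ → X => ∃ i, j ≤ idx (f i)), (∏ i, q (f i)) * d j :=
                (Finset.sum_filter _ _).symm
            _ = (∑ f ∈ univ.filter (fun f : Fin ℓ → X => ∃ i, j ≤ idx (f i)), ∏ i, q (f i)) * d j := by
                rw [Finset.sum_mul]
            _ = d j * (1 - (sQ j)^ℓ) := by rw [h1]; ring
  -- bounds for analytic lemma
  have hsQ0 : ∀ j, 0 ≤ sQ j := fun j => Finset.sum_nonneg fun x _ => hq x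
  have hsQ1 : ∀ j, sQ j ≤ 1 := fun j => by
    rw [← hq1]
    exact Finset.sum_le_sum_of_subset_of_nonneg (Finset.filter_subset _ _) (fun x _ _ => hq x)
  have hRt0 : ∀ j, 0 ≤ Rt j := fun j => Finset.sum_nonneg fun x _ => hr0 x
  have hRt1 : ∀ j, Rt j ≤ 1 := fun j => le_trans
    (Finset.sum_le_sum_of_subset_of_nonneg (Finset.filter_subset _ _) (fun x _ _ => hr0 x)) hr1
  have hRks : ∀ j, Rt j ≤ (k:ℝ) * (1 - sQ j) := by
    intro j
    have hqsplit := Finset.sum_filter_add_sum_filter_not (univ : Finset X) (fun x => idx x < j) q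
    rw [hq1] at hqsplit
    have hfeq : (univ : Finset X).filter (fun x => j ≤ idx x)
        = (univ : Finset X).filter (fun x => ¬ idx x < j) := by
      apply Finset.filter_congr; intro x _; simp [not_lt]
    have hRtj : Rt j = ∑ x ∈ univ.filter (fun x => ¬ idx x < j), r x := by
      rw [show Rt j = ∑ x ∈ univ.filter (fun x => j ≤ idx x), r x from rfl, hfeq]
    calc Rt j = ∑ x ∈ univ.filter (fun x => ¬ idx x < j), r x := hRtj
      _ ≤ ∑ x ∈ univ.filter (fun x => ¬ idx x < j), (k:ℝ) * q x :=
          Finset.sum_le_sum fun x _ => hrq x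
      _ = (k:ℝ) * ∑ x ∈ univ.filter (fun x => ¬ idx x < j), q x := by rw [Finset.mul_sum]
      _ = (k:ℝ) * (1 - sQ j) := by rw [hsQ]; simp only [hsQ] at hqsplit ⊢; rw [show (∑ x ∈ univ.filter (fun x => ¬ idx x < j), q x) = 1 - ∑ x ∈ univ.filter (fun x => idx x < j), q x by linarith]
  -- final chain
  calc c₀ * ∑ x, w x * r x
      = ∑ j ∈ range n, d j * (c₀ * Rt j) := by
        rw [abelL, Finset.mul_sum]
        exact Finset.sum_congr rfl fun j _ => by ring
    _ ≤ ∑ j ∈ range n, d j * (1 - (sQ j)^ℓ) :=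
        Finset.sum_le_sum fun j _ => mul_le_mul_of_nonneg_left
          (analytic_key k ℓ hk hℓ _ _ (hsQ0 j) (hsQ1 j) (hRt0 j) (hRt1 j) (hRks j)) (hd0 j)
    _ = ∑ f : Fin ℓ → X, (∏ i, q (f i)) * ∑ j ∈ range n, (if ∃ i, j ≤ idx (f i) then d j else 0) :=
        hswap.symm
    _ ≤ ∑ f : Fin ℓ → X, (∏ i, q (f i)) * ⨆ i, w (f i) :=
        Finset.sum_le_sum fun f _ => mul_le_mul_of_nonneg_left (hEf f)
          (Finset.prod_nonneg fun i _ => hq _)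
section Helpers
open Finset

lemma le_biSup_fin {X : Type*} [Fintype X] (g : X → ℝ) {S : Finset X} {x₀ : X} (hx : x₀ ∈ S) :
    g x₀ ≤ ⨆ x ∈ S, g x := by
  calc g x₀ = ⨆ _ : x₀ ∈ S, g x₀ := (ciSup_pos (f := fun _ : x₀ ∈ S => g x₀) hx).symm
    _ ≤ ⨆ x, ⨆ _ : x ∈ S, g x :=
        le_ciSup (f := fun x => ⨆ _ : x ∈ S, g x) (Finite.bddAbove_range _) x₀

lemma biSup_le_fin {X : Type*} [Fintype X] (g : X → ℝ) (S : Finset X) {B : ℝ} (hB : 0 ≤ B)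
    (h : ∀ x, g x ≤ B) : (⨆ x ∈ S, g x) ≤ B :=
  Real.iSup_le (fun x => Real.iSup_le (fun _ => h x) hB) hB

end Helpers
open Finset in
lemma main_bound {X Y : Type*} [Fintype X] [Fintype Y] (W : X → Y → ℝ)
    (hW_nonneg : ∀ x y, 0 ≤ W x y) (hW_sum : ∀ x, ∑ y, W x y = 1)
    (k ℓ : ℕ) (hk : 1 ≤ k) (hℓ : 1 ≤ ℓ) (hkX : k ≤ Fintype.card X) :
    ((k : ℝ) / ℓ) * (1 - (1 - 1 / (k : ℝ))^ℓ) * SchanNS W k ≤ Schan W ℓ := by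
  classical
  haveI hXne : Nonempty X := Fintype.card_pos_iff.mp (by omega)
  haveI hYne : Nonempty Y := by
    by_contra h
    rw [not_nonempty_iff] at h
    have h0 := hW_sum (Classical.arbitrary X)
    simp at h0
  haveI : Nonempty (Fin ℓ) := Fin.pos_iff_nonempty.mp (by omega)
  have hk0 : (0:ℝ) < k := by exact_mod_cast hk
  have hℓ0 : (0:ℝ) < ℓ := by exact_mod_cast hℓ
  have hki1 : 1/(k:ℝ) ≤ 1 := by rw [div_le_one hk0]; exact_mod_cast hk
  have hb0 : (0:ℝ) ≤ 1 - 1/(k:ℝ) := by linarith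
  set c₀ : ℝ := 1 - (1 - 1/(k:ℝ))^ℓ with hc₀
  have hc₀pos : 0 < c₀ := by
    have hlt : (1 - 1/(k:ℝ))^ℓ < 1 :=
      pow_lt_one₀ hb0 (by
        have h01 : (0:ℝ) < 1/(k:ℝ) := by positivity
        linarith) (by omega)
    simp only [hc₀]; linarith
  have hW1 : ∀ x y, W x y ≤ 1 := fun x y => by
    rw [← hW_sum x]
    exact Finset.single_le_sum (fun y _ => hW_nonneg x y) (mem_univ y)
  -- the deterministic value set
  set Aset := { v : ℝ | ∃ S : Finset X, S.card ≤ ℓ ∧ v = ∑ y, ⨆ x ∈ S, W x y } with hAset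
  have hAbdd : BddAbove Aset := by
    refine ⟨(Fintype.card Y : ℝ), ?_⟩
    rintro v ⟨S, -, rfl⟩
    calc ∑ y, ⨆ x ∈ S, W x y ≤ ∑ _y : Y, (1:ℝ) :=
        Finset.sum_le_sum fun y _ => biSup_le_fin _ _ zero_le_one (fun x => hW1 x y)
      _ = Fintype.card Y := by simp
  -- every feasible NS point is covered
  have hmem : ∀ v ∈ { v : ℝ | ∃ r : X → Y → ℝ, ∃ p : X → ℝ,
      (∀ x y, 0 ≤ r x y) ∧ (∀ x y, r x y ≤ p x) ∧ (∀ x, p x ≤ 1) ∧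
      (∀ y, ∑ x, r x y ≤ 1) ∧ (∑ x, p x = k) ∧
      v = (1 / k) * ∑ x, ∑ y, W x y * r x y }, v * ((k:ℝ) * c₀) ≤ sSup Aset := by
    rintro v ⟨r, p, hr0, hrp, hp1, hry, hpk, rfl⟩
    set q : X → ℝ := fun x => p x / k with hq
    have hp0 : ∀ x, 0 ≤ p x := fun x => le_trans (hr0 x (Classical.arbitrary Y)) (hrp x _)
    have hq0 : ∀ x, 0 ≤ q x := fun x => div_nonneg (hp0 x) hk0.le
    have hq1 : ∑ x, q x = 1 := by
      simp only [hq]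
      rw [← Finset.sum_div, hpk]
      field_simp
    have hrq : ∀ x y, r x y ≤ (k:ℝ) * q x := by
      intro x y
      have hqx : (k:ℝ) * q x = p x := by simp only [hq]; field_simp
      rw [hqx]; exact hrp x y
    have hE : c₀ * (∑ x, ∑ y, W x y * r x y) ≤
        ∑ f : Fin ℓ → X, (∏ i, q (f i)) * (∑ y, ⨆ x ∈ univ.image f, W x y) := by
      have hswapxy : ∑ x, ∑ y, W x y * r x y = ∑ y, ∑ x, W x y * r x y := Finset.sum_comm
      rw [hswapxy, Finset.mul_sum]
      have hy : ∀ y, c₀ * ∑ x, W x y * r x y ≤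
          ∑ f : Fin ℓ → X, (∏ i, q (f i)) * ⨆ i, W (f i) y := fun y =>
        key_lemma (fun x => W x y) q (fun x => r x y) k ℓ hk hℓ (fun x => hW_nonneg x y)
          hq0 hq1 (fun x => hr0 x y) (fun x => hrq x y) (hry y)
      calc ∑ y, c₀ * ∑ x, W x y * r x y
          ≤ ∑ y, ∑ f : Fin ℓ → X, (∏ i, q (f i)) * ⨆ i, W (f i) y :=
            Finset.sum_le_sum fun y _ => hy y
        _ = ∑ f : Fin ℓ → X, ∑ y, (∏ i, q (f i)) * ⨆ i, W (f i) y := Finset.sum_comm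
        _ ≤ ∑ f : Fin ℓ → X, ∑ y, (∏ i, q (f i)) * ⨆ x ∈ univ.image f, W x y := by
            refine Finset.sum_le_sum fun f _ => Finset.sum_le_sum fun y _ =>
              mul_le_mul_of_nonneg_left ?_ (Finset.prod_nonneg fun i _ => hq0 _)
            have h0le : (0:ℝ) ≤ ⨆ x ∈ univ.image f, W x y :=
              le_trans (hW_nonneg (f (Classical.arbitrary (Fin ℓ))) y)
                (le_biSup_fin (fun x => W x y) (Finset.mem_image_of_mem f (mem_univ _)))
            exact Real.iSup_le
              (fun i => le_biSup_fin (fun x => W x y) (Finset.mem_image_of_mem f (mem_univ i))) h0le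
        _ = ∑ f : Fin ℓ → X, (∏ i, q (f i)) * ∑ y, ⨆ x ∈ univ.image f, W x y := by
            refine Finset.sum_congr rfl fun f _ => (Finset.mul_sum _ _ _).symm
    have htot : ∑ f : Fin ℓ → X, ∏ i, q (f i) = 1 := by
      have h := Finset.prod_univ_sum (fun _ : Fin ℓ => (univ : Finset X)) (fun _ x => q x)
      rw [Fintype.piFinset_univ] at h
      rw [← h]
      simp [hq1]
    have hex : ∃ f : Fin ℓ → X, c₀ * (∑ x, ∑ y, W x y * r x y) ≤
        ∑ y, ⨆ x ∈ univ.image f, W x y := by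
      by_contra hcon
      push_neg at hcon
      obtain ⟨f₀, -, hf₀⟩ := Finset.exists_lt_of_sum_lt
        (f := fun _ : Fin ℓ → X => (0:ℝ)) (g := fun f => ∏ i, q (f i))
        (by rw [htot]; simp)
      have hlt : ∑ f : Fin ℓ → X, (∏ i, q (f i)) * (∑ y, ⨆ x ∈ univ.image f, W x y) <
          ∑ f : Fin ℓ → X, (∏ i, q (f i)) * (c₀ * (∑ x, ∑ y, W x y * r x y)) := by
        refine Finset.sum_lt_sum
          (fun f _ => mul_le_mul_of_nonneg_left (hcon f).le
            (Finset.prod_nonneg fun i _ => hq0 _))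
          ⟨f₀, mem_univ _, mul_lt_mul_of_pos_left (hcon f₀) hf₀⟩
      rw [← Finset.sum_mul, htot, one_mul] at hlt
      exact absurd hE (not_le.mpr hlt)
    obtain ⟨f, hf⟩ := hex
    have hmemA : (∑ y, ⨆ x ∈ univ.image f, W x y) ∈ Aset :=
      ⟨univ.image f, le_trans Finset.card_image_le (by simp), rfl⟩
    have hle : ∑ y, ⨆ x ∈ univ.image f, W x y ≤ sSup Aset := le_csSup hAbdd hmemA
    have harith : (1/(k:ℝ) * ∑ x, ∑ y, W x y * r x y) * ((k:ℝ)*c₀) =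
        c₀ * ∑ x, ∑ y, W x y * r x y := by field_simp
    rw [harith]
    exact hf.trans hle
  -- nonemptiness of the NS feasible set
  have hNSne : { v : ℝ | ∃ r : X → Y → ℝ, ∃ p : X → ℝ,
      (∀ x y, 0 ≤ r x y) ∧ (∀ x y, r x y ≤ p x) ∧ (∀ x, p x ≤ 1) ∧
      (∀ y, ∑ x, r x y ≤ 1) ∧ (∑ x, p x = k) ∧
      v = (1 / k) * ∑ x, ∑ y, W x y * r x y }.Nonempty := by
    have hcX : (0:ℝ) < Fintype.card X := by
      have : 0 < Fintype.card X := Fintype.card_pos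
      exact_mod_cast this
    refine ⟨0, (fun _ _ => 0), (fun _ => (k:ℝ)/(Fintype.card X : ℝ)), ?_, ?_, ?_, ?_, ?_, ?_⟩
    · intro x y; exact le_refl 0
    · intro x y; positivity
    · intro x
      rw [div_le_one hcX]
      exact_mod_cast hkX
    · intro y; simp
    · rw [Finset.sum_const, Finset.card_univ, nsmul_eq_mul]
      field_simp
    · simp
  -- combine
  have hsup : sSup { v : ℝ | ∃ r : X → Y → ℝ, ∃ p : X → ℝ,
      (∀ x y, 0 ≤ r x y) ∧ (∀ x y, r x y ≤ p x) ∧ (∀ x, p x ≤ 1) ∧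
      (∀ y, ∑ x, r x y ≤ 1) ∧ (∑ x, p x = k) ∧
      v = (1 / k) * ∑ x, ∑ y, W x y * r x y } ≤ sSup Aset / ((k:ℝ)*c₀) := by
    refine csSup_le hNSne (fun v hv => ?_)
    rw [le_div_iff₀ (mul_pos hk0 hc₀pos)]
    exact hmem v hv
  rw [Schan, SchanNS]
  have h2 := mul_le_mul_of_nonneg_left hsup
    (le_of_lt (mul_pos (div_pos hk0 hℓ0) hc₀pos))
  calc ((k:ℝ)/ℓ) * c₀ * sSup { v : ℝ | ∃ r : X → Y → ℝ, ∃ p : X → ℝ,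
      (∀ x y, 0 ≤ r x y) ∧ (∀ x y, r x y ≤ p x) ∧ (∀ x, p x ≤ 1) ∧
      (∀ y, ∑ x, r x y ≤ 1) ∧ (∑ x, p x = k) ∧
      v = (1 / k) * ∑ x, ∑ y, W x y * r x y }
      ≤ ((k:ℝ)/ℓ) * c₀ * (sSup Aset / ((k:ℝ)*c₀)) := by
        rw [mul_assoc, mul_assoc] at h2 ⊢; exact h2
    _ = (1/(ℓ:ℝ)) * sSup Aset := by field_simp

/-- `S(W,ℓ) ≥ (k/ℓ)(1 − (1 − 1/k)^ℓ) · S^NS(W,k)`; in particular for `ℓ = k`,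
`S(W,k) ≥ (1 − (1−1/k)^k) S^NS(W,k) ≥ (1 − e⁻¹) S^NS(W,k)`. -/
theorem ns_advantage {X Y : Type*} [Fintype X] [Fintype Y] (W : X → Y → ℝ)
    (hW_nonneg : ∀ x y, 0 ≤ W x y) (hW_sum : ∀ x, ∑ y, W x y = 1)
    (k ℓ : ℕ) (hk : 1 ≤ k) (hℓ : 1 ≤ ℓ) (hkX : k ≤ Fintype.card X) (hℓX : ℓ ≤ Fintype.card X) :
    ((k : ℝ) / ℓ) * (1 - (1 - 1 / (k : ℝ))^ℓ) * SchanNS W k ≤ Schan W ℓ ∧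
      (1 - (1 - 1 / (k : ℝ))^k) * SchanNS W k ≤ Schan W k ∧
      (1 - Real.exp (-1)) * SchanNS W k ≤ (1 - (1 - 1 / (k : ℝ))^k) * SchanNS W k := by
  classical
  haveI hXne : Nonempty X := Fintype.card_pos_iff.mp (by omega)
  haveI hYne : Nonempty Y := by
    by_contra h
    rw [not_nonempty_iff] at h
    have h0 := hW_sum (Classical.arbitrary X)
    simp at h0
  have hk0 : (0:ℝ) < k := by exact_mod_cast hk
  have part1 := main_bound W hW_nonneg hW_sum k ℓ hk hℓ hkX
  have part2 := main_bound W hW_nonneg hW_sum k k hk hk hkX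
  rw [div_self hk0.ne', one_mul] at part2
  refine ⟨part1, part2, ?_⟩
  have hW1 : ∀ x y, W x y ≤ 1 := fun x y => by
    rw [← hW_sum x]
    exact Finset.single_le_sum (fun y _ => hW_nonneg x y) (mem_univ y)
  have hki1 : 1/(k:ℝ) ≤ 1 := by rw [div_le_one hk0]; exact_mod_cast hk
  have hNSbdd : BddAbove { v : ℝ | ∃ r : X → Y → ℝ, ∃ p : X → ℝ,
      (∀ x y, 0 ≤ r x y) ∧ (∀ x y, r x y ≤ p x) ∧ (∀ x, p x ≤ 1) ∧
      (∀ y, ∑ x, r x y ≤ 1) ∧ (∑ x, p x = k) ∧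
      v = (1 / k) * ∑ x, ∑ y, W x y * r x y } := by
    refine ⟨(Fintype.card Y : ℝ), ?_⟩
    rintro v ⟨r, p, hr0, hrp, hp1, hry, hpk, rfl⟩
    have h1 : ∀ y, ∑ x, W x y * r x y ≤ 1 := fun y =>
      le_trans (Finset.sum_le_sum fun x _ =>
        mul_le_of_le_one_left (hr0 x y) (hW1 x y)) (hry y)
    have hcY : (0:ℝ) ≤ Fintype.card Y := by positivity
    calc (1/(k:ℝ)) * ∑ x, ∑ y, W x y * r x y
        = (1/(k:ℝ)) * ∑ y, ∑ x, W x y * r x y := by rw [Finset.sum_comm]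
      _ ≤ (1/(k:ℝ)) * ∑ _y : Y, (1:ℝ) := by
          refine mul_le_mul_of_nonneg_left (Finset.sum_le_sum fun y _ => h1 y) (by positivity)
      _ = (1/(k:ℝ)) * Fintype.card Y := by simp
      _ ≤ Fintype.card Y := by nlinarith
  have h0mem : (0:ℝ) ∈ { v : ℝ | ∃ r : X → Y → ℝ, ∃ p : X → ℝ,
      (∀ x y, 0 ≤ r x y) ∧ (∀ x y, r x y ≤ p x) ∧ (∀ x, p x ≤ 1) ∧
      (∀ y, ∑ x, r x y ≤ 1) ∧ (∑ x, p x = k) ∧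
      v = (1 / k) * ∑ x, ∑ y, W x y * r x y } := by
    have hcX : (0:ℝ) < Fintype.card X := by
      have : 0 < Fintype.card X := Fintype.card_pos
      exact_mod_cast this
    refine ⟨(fun _ _ => 0), (fun _ => (k:ℝ)/(Fintype.card X : ℝ)), ?_, ?_, ?_, ?_, ?_, ?_⟩
    · intro x y; exact le_refl 0
    · intro x y; positivity
    · intro x
      rw [div_le_one hcX]
      exact_mod_cast hkX
    · intro y; simp
    · rw [Finset.sum_const, Finset.card_univ, nsmul_eq_mul]
      field_simp
    · simp
  have hSNS0 : 0 ≤ SchanNS W k := by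
    rw [SchanNS]; exact le_csSup hNSbdd h0mem
  have hb0 : (0:ℝ) ≤ 1 - 1/(k:ℝ) := by linarith
  have h1 : 1 - 1/(k:ℝ) ≤ Real.exp (-(1/(k:ℝ))) := by
    have := Real.add_one_le_exp (-(1/(k:ℝ)))
    linarith
  have h2 := pow_le_pow_left₀ hb0 h1 k
  rw [← Real.exp_nat_mul] at h2
  have h3 : (k:ℝ) * (-(1/(k:ℝ))) = -1 := by field_simp
  rw [h3] at h2
  exact mul_le_mul_of_nonneg_right (by linarith) hSNS0
end

section
/- Centered bound: for any channel W and integer k ≥ 2 with k ≤ |X|, S(W,k) − 1/k ≥ (1 − (1 − 1/k)^{k−1}) · (S^NS(W,k) − 1/k). -/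
open Finset

/-!
Greedy rounding of a non-signaling solution `(r, p)` of value `G = ∑ₓ ∑ᵧ W(y|x) r(x,y)`.
For a list `S` with `mᵧ = max_{x∈S} W(y|x)`, the constraints `r ≤ p` and `∑ₓ r(x,y) ≤ 1` give
`G - ∑ᵧ mᵧ ≤ ∑ₓ p(x) · gain(x)`, where `gain(x)` is the increase of `∑ᵧ mᵧ` when `x` is added
to `S`. As `∑ₓ p(x) = k`, some `x` gains at least `(G - ∑ᵧ mᵧ)/k`, so each greedy step shrinks
the gap to `G` by the factor `1 - 1/k`. Starting from a singleton (value `1`) and adding `k - 1`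
letters leaves a gap of at most `(1 - 1/k)^{k-1} (G - 1)`.
-/

section Greedy

variable {X Y : Type*}

lemma le_biSup_of_mem [Finite X] (f : X → ℝ) {S : Finset X} {x : X} (hx : x ∈ S) :
    f x ≤ ⨆ x ∈ S, f x := by
  have hbdd : BddAbove (Set.range fun x => ⨆ _ : x ∈ S, f x) := (Set.finite_range _).bddAbove
  simpa only [ciSup_pos hx] using le_ciSup hbdd x

lemma biSup_insert_of_nonneg [Finite X] [DecidableEq X] {f : X → ℝ} (hf : ∀ x, 0 ≤ f x)
    (a : X) (S : Finset X) : ⨆ x ∈ insert a S, f x = max (f a) (⨆ x ∈ S, f x) := by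
  have hnonneg : ∀ T : Finset X, 0 ≤ ⨆ x ∈ T, f x :=
    fun T => Real.iSup_nonneg fun x => Real.iSup_nonneg fun _ => hf x
  refine le_antisymm ?_ (max_le (le_biSup_of_mem f (mem_insert_self a S)) ?_)
  · refine Real.iSup_le (fun x => Real.iSup_le (fun hx => ?_) (le_max_of_le_right (hnonneg S)))
      (le_max_of_le_right (hnonneg S))
    rcases mem_insert.mp hx with rfl | hx
    · exact le_max_left _ _
    · exact le_max_of_le_right (le_biSup_of_mem f hx)
  · exact Real.iSup_le (fun x => Real.iSup_le (fun hx => le_biSup_of_mem f (mem_insert_of_mem hx))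
      (hnonneg _)) (hnonneg _)

lemma exists_le_sum_mul_of_le_sum_mul [Fintype X] [Nonempty X] {p g : X → ℝ}
    (hp : ∀ x, 0 ≤ p x) {A : ℝ} (h : A ≤ ∑ x, p x * g x) : ∃ x, A ≤ (∑ x, p x) * g x := by
  obtain ⟨x₀, -, hx₀⟩ := exists_max_image univ g univ_nonempty
  refine ⟨x₀, h.trans ?_⟩
  rw [sum_mul]
  exact sum_le_sum fun x _ => mul_le_mul_of_nonneg_left (hx₀ x (mem_univ x)) (hp x)

variable [Fintype X] [Fintype Y]

noncomputable def listValue (W : X → Y → ℝ) (S : Finset X) : ℝ := ∑ y, ⨆ x ∈ S, W x y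

lemma listValue_insert [DecidableEq X] {W : X → Y → ℝ} (hW : ∀ x y, 0 ≤ W x y) (a : X)
    (S : Finset X) : listValue W (insert a S) = ∑ y, max (W a y) (⨆ x ∈ S, W x y) :=
  sum_congr rfl fun y _ => biSup_insert_of_nonneg (fun x => hW x y) a S

lemma listValue_singleton {W : X → Y → ℝ} (hW : ∀ x y, 0 ≤ W x y)
    (hW_sum : ∀ x, ∑ y, W x y = 1) (x : X) : listValue W {x} = 1 := by
  classical
  rw [← insert_empty, listValue_insert hW, ← hW_sum x]
  refine sum_congr rfl fun y _ => max_eq_left ?_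
  simpa using hW x y

lemma listValue_div_le_Schan {W : X → Y → ℝ} (hW : ∀ x y, 0 ≤ W x y) {k : ℕ} {S : Finset X}
    (hS : S.card ≤ k) : listValue W S / k ≤ Schan W k := by
  have hbdd : BddAbove {v : ℝ | ∃ S : Finset X, S.card ≤ k ∧ v = ∑ y, ⨆ x ∈ S, W x y} := by
    refine ⟨∑ y, ∑ x, W x y, ?_⟩
    rintro v ⟨T, -, rfl⟩
    have hcol : ∀ y, 0 ≤ ∑ x, W x y := fun y => sum_nonneg fun x _ => hW x y
    exact sum_le_sum fun y _ => Real.iSup_le (fun x => Real.iSup_le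
      (fun _ => single_le_sum (fun x _ => hW x y) (mem_univ x)) (hcol y)) (hcol y)
  rw [div_eq_inv_mul, Schan, one_div]
  exact mul_le_mul_of_nonneg_left (le_csSup hbdd ⟨S, hS, rfl⟩) (by positivity)

variable [DecidableEq X] {W : X → Y → ℝ} {r : X → Y → ℝ} {p : X → ℝ}

lemma sub_listValue_le_sum_mul_gain (hW : ∀ x y, 0 ≤ W x y) (hr0 : ∀ x y, 0 ≤ r x y)
    (hrp : ∀ x y, r x y ≤ p x) (hr1 : ∀ y, ∑ x, r x y ≤ 1) (S : Finset X) :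
    ∑ x, ∑ y, W x y * r x y - listValue W S ≤
      ∑ x, p x * (listValue W (insert x S) - listValue W S) := by
  set m : Y → ℝ := fun y => ⨆ x ∈ S, W x y
  have hm : ∀ y, 0 ≤ m y := fun y => Real.iSup_nonneg fun x => Real.iSup_nonneg fun _ => hW x y
  have hcol : ∑ y, (∑ x, r x y) * m y ≤ listValue W S :=
    sum_le_sum fun y _ => mul_le_of_le_one_left (hm y) (hr1 y)
  have hgain : ∀ x y, r x y * (W x y - m y) ≤ p x * (max (W x y) (m y) - m y) := by
    intro x y
    rcases le_total (W x y) (m y) with h | h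
    · rw [max_eq_right h, sub_self, mul_zero]
      exact mul_nonpos_of_nonneg_of_nonpos (hr0 x y) (sub_nonpos.mpr h)
    · rw [max_eq_left h]
      exact mul_le_mul_of_nonneg_right (hrp x y) (sub_nonneg.mpr h)
  calc ∑ x, ∑ y, W x y * r x y - listValue W S
      ≤ ∑ x, ∑ y, W x y * r x y - ∑ y, (∑ x, r x y) * m y := by linarith
    _ = ∑ x, ∑ y, r x y * (W x y - m y) := by
      simp only [mul_sub, sum_sub_distrib, sum_mul]
      rw [sum_comm (f := fun x y => r x y * m y)]
      simp only [mul_comm]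
    _ ≤ ∑ x, ∑ y, p x * (max (W x y) (m y) - m y) :=
      sum_le_sum fun x _ => sum_le_sum fun y _ => hgain x y
    _ = ∑ x, p x * (listValue W (insert x S) - listValue W S) := by
      refine sum_congr rfl fun x _ => ?_
      rw [listValue_insert hW, listValue, ← sum_sub_distrib, mul_sum]

lemma exists_gap_insert_le [Nonempty X] (hW : ∀ x y, 0 ≤ W x y) (hr0 : ∀ x y, 0 ≤ r x y)
    (hrp : ∀ x y, r x y ≤ p x) (hr1 : ∀ y, ∑ x, r x y ≤ 1) (hp0 : ∀ x, 0 ≤ p x) {k : ℝ}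
    (hk : 0 < k) (hpk : ∑ x, p x = k) (S : Finset X) :
    ∃ x, ∑ x, ∑ y, W x y * r x y - listValue W (insert x S) ≤
      (1 - 1 / k) * (∑ x, ∑ y, W x y * r x y - listValue W S) := by
  obtain ⟨x, hx⟩ := exists_le_sum_mul_of_le_sum_mul hp0
    (sub_listValue_le_sum_mul_gain hW hr0 hrp hr1 S)
  rw [hpk, ← div_le_iff₀' hk] at hx
  refine ⟨x, ?_⟩
  rw [one_sub_mul, one_div_mul_eq_div]
  linarith

lemma exists_card_le_gap_le_pow [Nonempty X] (hW : ∀ x y, 0 ≤ W x y) (hr0 : ∀ x y, 0 ≤ r x y)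
    (hrp : ∀ x y, r x y ≤ p x) (hr1 : ∀ y, ∑ x, r x y ≤ 1) (hp0 : ∀ x, 0 ≤ p x) {k : ℝ}
    (hk : 1 ≤ k) (hpk : ∑ x, p x = k) (S₀ : Finset X) (t : ℕ) :
    ∃ S : Finset X, S.card ≤ S₀.card + t ∧ ∑ x, ∑ y, W x y * r x y - listValue W S ≤
      (1 - 1 / k) ^ t * (∑ x, ∑ y, W x y * r x y - listValue W S₀) := by
  induction t with
  | zero => exact ⟨S₀, le_rfl, by simp⟩
  | succ t ih =>
    obtain ⟨S, hcard, hgap⟩ := ih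
    obtain ⟨x, hx⟩ := exists_gap_insert_le hW hr0 hrp hr1 hp0 (by linarith) hpk S
    have hfactor : 0 ≤ 1 - 1 / k := sub_nonneg.mpr ((div_le_one (by linarith)).mpr hk)
    refine ⟨insert x S, (card_insert_le x S).trans (by omega), ?_⟩
    calc _ ≤ (1 - 1 / k) * (∑ x, ∑ y, W x y * r x y - listValue W S) := hx
      _ ≤ (1 - 1 / k) * ((1 - 1 / k) ^ t * (∑ x, ∑ y, W x y * r x y - listValue W S₀)) := by
        gcongr
      _ = _ := by ring

end Greedy

section Bounds

variable {X Y : Type*} [Fintype X] [Fintype Y] {W : X → Y → ℝ}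

lemma SchanNS_le_of_forall {k : ℕ} (hkX : k ≤ Fintype.card X) {B : ℝ}
    (h : ∀ (r : X → Y → ℝ) (p : X → ℝ), (∀ x y, 0 ≤ r x y) → (∀ x y, r x y ≤ p x) →
      (∀ x, p x ≤ 1) → (∀ y, ∑ x, r x y ≤ 1) → ∑ x, p x = k →
      (1 / k) * ∑ x, ∑ y, W x y * r x y ≤ B) :
    SchanNS W k ≤ B := by
  have hsum : ∑ _x : X, (k / Fintype.card X : ℝ) = k := by
    by_cases hX : Fintype.card X = 0
    · simp [hX, show k = 0 by omega]
    · simp [field]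
  refine csSup_le ⟨_, fun _ _ => 0, fun _ => k / Fintype.card X, fun _ _ => le_rfl,
    fun _ _ => by positivity, fun _ => div_le_one_of_le₀ (by exact_mod_cast hkX) (by positivity),
    fun _ => by simp, hsum, rfl⟩ ?_
  rintro v ⟨r, p, hr0, hrp, hp1, hr1, hpk, rfl⟩
  exact h r p hr0 hrp hp1 hr1 hpk

lemma centered_bound_of_feasible [Nonempty X] (hW : ∀ x y, 0 ≤ W x y)
    (hW_sum : ∀ x, ∑ y, W x y = 1) {k : ℕ} (hk : 1 ≤ k) {r : X → Y → ℝ} {p : X → ℝ}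
    (hr0 : ∀ x y, 0 ≤ r x y) (hrp : ∀ x y, r x y ≤ p x) (hr1 : ∀ y, ∑ x, r x y ≤ 1)
    (hpk : ∑ x, p x = k) :
    (1 - (1 - 1 / (k : ℝ)) ^ (k - 1)) * ((1 / k) * ∑ x, ∑ y, W x y * r x y - 1 / k) ≤
      Schan W k - 1 / k := by
  classical
  obtain ⟨x₀⟩ := ‹Nonempty X›
  obtain ⟨y₀⟩ : Nonempty Y := by
    by_contra hY
    simpa [not_nonempty_iff.mp hY] using hW_sum x₀
  obtain ⟨S, hcard, hgap⟩ := exists_card_le_gap_le_pow hW hr0 hrp hr1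
    (fun x => (hr0 x y₀).trans (hrp x y₀)) (by exact_mod_cast hk) hpk {x₀} (k - 1)
  rw [listValue_singleton hW hW_sum] at hgap
  rw [card_singleton] at hcard
  have hS := listValue_div_le_Schan hW (hcard.trans (by omega) : S.card ≤ k)
  set G := ∑ x, ∑ y, W x y * r x y
  set c := (1 - 1 / (k : ℝ)) ^ (k - 1)
  calc (1 - c) * ((1 / k) * G - 1 / k) = (G - c * (G - 1) - 1) / k := by ring
    _ ≤ (listValue W S - 1) / k := by gcongr; linarith
    _ = listValue W S / k - 1 / k := sub_div _ _ _
    _ ≤ Schan W k - 1 / k := by gcongr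

end Bounds

/-- centered bound
`S(W,k) − 1/k ≥ (1 − (1 − 1/k)^{k−1}) · (S^NS(W,k) − 1/k)` for `2 ≤ k ≤ |X|`. -/
theorem centered_bound {X Y : Type*} [Fintype X] [Fintype Y] (W : X → Y → ℝ)
    (hW_nonneg : ∀ x y, 0 ≤ W x y) (hW_sum : ∀ x, ∑ y, W x y = 1)
    (k : ℕ) (hk : 2 ≤ k) (hkX : k ≤ Fintype.card X) :
    (1 - (1 - 1 / (k : ℝ))^(k - 1)) * (SchanNS W k - 1 / k) ≤ Schan W k - 1 / k := by
  have : Nonempty X := Fintype.card_pos_iff.mp (by omega)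
  set c := (1 - 1 / (k : ℝ)) ^ (k - 1)
  have hc : 0 < 1 - c := by
    have hk' : (2 : ℝ) ≤ k := by exact_mod_cast hk
    have : c < 1 := pow_lt_one₀ (by rw [sub_nonneg, div_le_one (by linarith)]; linarith)
      (by rw [sub_lt_self_iff]; positivity) (by omega)
    linarith
  have hNS : SchanNS W k ≤ 1 / k + (Schan W k - 1 / k) / (1 - c) :=
    SchanNS_le_of_forall hkX fun r p hr0 hrp _ hr1 hpk => by
      rw [← sub_le_iff_le_add', le_div_iff₀' hc]
      exact centered_bound_of_feasible hW_nonneg hW_sum (by omega) hr0 hrp hr1 hpk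
  calc (1 - c) * (SchanNS W k - 1 / k) ≤ (1 - c) * ((Schan W k - 1 / k) / (1 - c)) := by
        gcongr; linarith
    _ = Schan W k - 1 / k := mul_div_cancel₀ _ hc.ne'
end

section
/- Random coding bound: let (r,p) be an optimal solution of the LP for S^NS(W,k), and let S be the (multi)set of ℓ i.i.d. samples from the distribution p_x/k on X. Then E_S[(1/ℓ) ∑_y max_{x∈S} W(y|x)] ≥ (k/ℓ)(1 − (1−1/k)^ℓ) · S^NS(W,k). -/
open Finset

private lemma sum_fn_succ {X : Type*} [Fintype X] (ℓ : ℕ) (F : (Fin (ℓ+1) → X) → ℝ) :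
    ∑ s : Fin (ℓ+1) → X, F s = ∑ x : X, ∑ s : Fin ℓ → X, F (Fin.cons x s) := by
  rw [← Equiv.sum_comp (Fin.consEquiv fun _ => X) F, Fintype.sum_prod_type]
  rfl

private lemma prod_cons_comp {X : Type*} (P : X → ℝ) {ℓ : ℕ} (x : X) (s : Fin ℓ → X) :
    ∏ i, P ((Fin.cons x s : Fin (ℓ+1) → X) i) = P x * ∏ i, P (s i) := by
  simp [Fin.prod_univ_succ]

private lemma sum_prod_one {X : Type*} [Fintype X] (P : X → ℝ) (hP1 : ∑ x, P x = 1) :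
    ∀ ℓ : ℕ, ∑ s : Fin ℓ → X, ∏ i, P (s i) = 1 := by
  intro ℓ
  induction ℓ with
  | zero => simp
  | succ n ih =>
    rw [sum_fn_succ n (fun s => ∏ i, P (s i))]
    simp only [prod_cons_comp]
    calc ∑ x : X, ∑ s : Fin n → X, P x * ∏ i, P (s i)
        = ∑ x : X, P x * ∑ s : Fin n → X, ∏ i, P (s i) := by
          exact Finset.sum_congr rfl fun x _ => (Finset.mul_sum _ _ _).symm
      _ = 1 := by rw [ih] ; simpa using hP1

private lemma key_bound {X : Type*} [Fintype X] (P f t : X → ℝ)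
    (hP : ∀ x, 0 ≤ P x) (hP1 : ∑ x, P x = 1)
    (hf : ∀ x, 0 ≤ f x) (ht0 : ∀ x, 0 ≤ t x) (ht1 : ∀ x, t x ≤ 1) :
    ∀ ℓ : ℕ, (∑ x, P x * (f x * t x)) * ∑ i ∈ Finset.range ℓ, (∑ x, P x * (1 - t x))^i
      ≤ ∑ s : Fin ℓ → X, (∏ i, P (s i)) * ⨆ i, f (s i) := by
  set A := ∑ x, P x * (f x * t x) with hA_def
  set B := ∑ x, P x * (1 - t x) with hB_def
  have hA : 0 ≤ A := Finset.sum_nonneg fun x _ =>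
    mul_nonneg (hP x) (mul_nonneg (hf x) (ht0 x))
  have hB : 0 ≤ B := Finset.sum_nonneg fun x _ =>
    mul_nonneg (hP x) (by linarith [ht1 x])
  intro ℓ
  induction ℓ with
  | zero => simp
  | succ n ih =>
    -- pointwise convexity step
    have step1 : ∀ (x : X) (s : Fin n → X),
        t x * f x + (1 - t x) * (⨆ i, f (s i)) ≤ ⨆ i, f ((Fin.cons x s : Fin (n+1) → X) i) := by
      intro x s
      have hbdd : BddAbove (Set.range fun i : Fin (n+1) => f ((Fin.cons x s : Fin (n+1) → X) i)) :=
        Finite.bddAbove_range _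
      have hx : f x ≤ ⨆ i, f ((Fin.cons x s : Fin (n+1) → X) i) := by
        have := le_ciSup hbdd (0 : Fin (n+1))
        simpa using this
      have hs : (⨆ i, f (s i)) ≤ ⨆ i, f ((Fin.cons x s : Fin (n+1) → X) i) := by
        cases n with
        | zero =>
          rw [Real.iSup_of_isEmpty]
          exact le_trans (hf x) hx
        | succ m =>
          refine ciSup_le fun i => ?_
          have := le_ciSup hbdd i.succ
          simpa using this
      have h1 : t x * f x ≤ t x * ⨆ i, f ((Fin.cons x s : Fin (n+1) → X) i) :=
        mul_le_mul_of_nonneg_left hx (ht0 x)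
      have h2 : (1 - t x) * (⨆ i, f (s i)) ≤
          (1 - t x) * ⨆ i, f ((Fin.cons x s : Fin (n+1) → X) i) :=
        mul_le_mul_of_nonneg_left hs (by linarith [ht1 x])
      calc t x * f x + (1 - t x) * (⨆ i, f (s i))
          ≤ t x * (⨆ i, f ((Fin.cons x s : Fin (n+1) → X) i))
            + (1 - t x) * ⨆ i, f ((Fin.cons x s : Fin (n+1) → X) i) := add_le_add h1 h2
        _ = ⨆ i, f ((Fin.cons x s : Fin (n+1) → X) i) := by ring
    -- expansion of the (n+1)-fold sum
    have expand : ∑ s : Fin (n+1) → X, (∏ i, P (s i)) * ⨆ i, f (s i)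
        = ∑ x : X, ∑ s : Fin n → X,
            (P x * ∏ i, P (s i)) * ⨆ i, f ((Fin.cons x s : Fin (n+1) → X) i) := by
      rw [sum_fn_succ n (fun s => (∏ i, P (s i)) * ⨆ i, f (s i))]
      simp only [prod_cons_comp]
    -- identity: A + B * M(n) = double sum of the convex combination
    have hid : A + B * (∑ s : Fin n → X, (∏ i, P (s i)) * ⨆ i, f (s i))
        = ∑ x : X, ∑ s : Fin n → X,
            (P x * ∏ i, P (s i)) * (t x * f x + (1 - t x) * ⨆ i, f (s i)) := by
      have h1 : ∀ x : X, ∑ s : Fin n → X, (P x * ∏ i, P (s i)) * (t x * f x)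
          = P x * (f x * t x) := by
        intro x
        calc ∑ s : Fin n → X, (P x * ∏ i, P (s i)) * (t x * f x)
            = (P x * (f x * t x)) * ∑ s : Fin n → X, ∏ i, P (s i) := by
              rw [Finset.mul_sum]
              exact Finset.sum_congr rfl fun s _ => by ring
          _ = P x * (f x * t x) := by rw [sum_prod_one P hP1 n, mul_one]
      have h2 : ∀ x : X, ∑ s : Fin n → X, (P x * ∏ i, P (s i)) * ((1 - t x) * ⨆ i, f (s i))
          = (P x * (1 - t x)) * ∑ s : Fin n → X, (∏ i, P (s i)) * ⨆ i, f (s i) := by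
        intro x
        rw [Finset.mul_sum]
        exact Finset.sum_congr rfl fun s _ => by ring
      calc A + B * (∑ s : Fin n → X, (∏ i, P (s i)) * ⨆ i, f (s i))
          = ∑ x : X, (P x * (f x * t x)
              + (P x * (1 - t x)) * ∑ s : Fin n → X, (∏ i, P (s i)) * ⨆ i, f (s i)) := by
            rw [Finset.sum_add_distrib, ← hA_def, ← Finset.sum_mul, ← hB_def]
        _ = ∑ x : X, (∑ s : Fin n → X, (P x * ∏ i, P (s i)) * (t x * f x)
              + ∑ s : Fin n → X, (P x * ∏ i, P (s i)) * ((1 - t x) * ⨆ i, f (s i))) := by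
            exact Finset.sum_congr rfl fun x _ => by rw [h1 x, h2 x]
        _ = ∑ x : X, ∑ s : Fin n → X,
              (P x * ∏ i, P (s i)) * (t x * f x + (1 - t x) * ⨆ i, f (s i)) := by
            exact Finset.sum_congr rfl fun x _ => by
              rw [← Finset.sum_add_distrib]
              exact Finset.sum_congr rfl fun s _ => by ring
    -- geometric sum recursion
    have hgeom : ∑ i ∈ Finset.range (n+1), B^i = 1 + B * ∑ i ∈ Finset.range n, B^i := by
      rw [Finset.sum_range_succ', Finset.mul_sum]
      simp only [pow_succ, pow_zero]
      rw [add_comm]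
      exact congrArg (1 + ·) (Finset.sum_congr rfl fun i _ => by ring)
    calc A * ∑ i ∈ Finset.range (n+1), B^i
        = A + B * (A * ∑ i ∈ Finset.range n, B^i) := by rw [hgeom]; ring
      _ ≤ A + B * (∑ s : Fin n → X, (∏ i, P (s i)) * ⨆ i, f (s i)) := by
          have := mul_le_mul_of_nonneg_left ih hB
          linarith
      _ = ∑ x : X, ∑ s : Fin n → X,
            (P x * ∏ i, P (s i)) * (t x * f x + (1 - t x) * ⨆ i, f (s i)) := hid
      _ ≤ ∑ x : X, ∑ s : Fin n → X,
            (P x * ∏ i, P (s i)) * ⨆ i, f ((Fin.cons x s : Fin (n+1) → X) i) := by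
          refine Finset.sum_le_sum fun x _ => Finset.sum_le_sum fun s _ => ?_
          exact mul_le_mul_of_nonneg_left (step1 x s)
            (mul_nonneg (hP x) (Finset.prod_nonneg fun i _ => hP (s i)))
      _ = ∑ s : Fin (n+1) → X, (∏ i, P (s i)) * ⨆ i, f (s i) := expand.symm

/-- random coding bound. If `(r,p)` is an optimal solution of the LP for
`S^NS(W,k)` and `S` consists of `ℓ` i.i.d. samples from the distribution `p_x/k`, then
`E_S[(1/ℓ) ∑_y max_{x∈S} W(y|x)] ≥ (k/ℓ)(1 − (1−1/k)^ℓ) · S^NS(W,k)`. -/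
theorem random_coding_bound {X Y : Type*} [Fintype X] [Fintype Y] (W : X → Y → ℝ)
    (hW_nonneg : ∀ x y, 0 ≤ W x y) (hW_sum : ∀ x, ∑ y, W x y = 1)
    (k ℓ : ℕ) (hk : 1 ≤ k) (hℓ : 1 ≤ ℓ)
    (r : X → Y → ℝ) (p : X → ℝ)
    (hr0 : ∀ x y, 0 ≤ r x y) (hrp : ∀ x y, r x y ≤ p x) (hp1 : ∀ x, p x ≤ 1)
    (hry : ∀ y, ∑ x, r x y ≤ 1) (hpsum : ∑ x, p x = k)
    (hopt : (1 / k) * ∑ x, ∑ y, W x y * r x y = SchanNS W k) :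
    ((k : ℝ) / ℓ) * (1 - (1 - 1 / (k : ℝ))^ℓ) * SchanNS W k ≤
      ∑ s : Fin ℓ → X, (∏ i, p (s i) / k) *
        ((1 / ℓ) * ∑ y, ⨆ i : Fin ℓ, W (s i) y) := by
  have hk0 : (0:ℝ) < k := by exact_mod_cast Nat.lt_of_lt_of_le Nat.zero_lt_one hk
  have hl0 : (0:ℝ) < ℓ := by exact_mod_cast Nat.lt_of_lt_of_le Nat.zero_lt_one hℓ
  have hY : Nonempty Y := by
    by_contra h
    rw [not_nonempty_iff] at h
    have hX : Nonempty X := by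
      by_contra hX
      rw [not_nonempty_iff] at hX
      have : (0:ℝ) = k := by simpa using hpsum
      exact absurd (this ▸ hk0) (lt_irrefl _)
    have := hW_sum (Classical.arbitrary X)
    simp at this
  have hp0 : ∀ x, 0 ≤ p x := fun x =>
    le_trans (hr0 x (Classical.arbitrary Y)) (hrp x _)
  set P : X → ℝ := fun x => p x / k with hP_def
  have hP : ∀ x, 0 ≤ P x := fun x => div_nonneg (hp0 x) hk0.le
  have hP1 : ∑ x, P x = 1 := by
    rw [hP_def, ← Finset.sum_div, hpsum, div_self hk0.ne']
  set c : ℝ := 1 - 1 / (k:ℝ) with hc_def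
  have hc0 : 0 ≤ c := by
    have h1 : 1 / (k:ℝ) ≤ 1 := by
      rw [div_le_one hk0]
      exact_mod_cast hk
    rw [hc_def]
    linarith
  have hgeo : ∑ i ∈ Finset.range ℓ, c^i = k * (1 - c^ℓ) := by
    have hcne : c ≠ 1 := by
      rw [hc_def]
      intro h
      have : 1 / (k:ℝ) = 0 := by linarith
      exact absurd this (by positivity)
    rw [geom_sum_eq hcne]
    rw [hc_def]
    field_simp
    ring
  -- per-output inequality
  have per_y : ∀ y : Y, (1 - c^ℓ) * ∑ x, W x y * r x y ≤
      ∑ s : Fin ℓ → X, (∏ i, P (s i)) * ⨆ i, W (s i) y := by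
    intro y
    set t : X → ℝ := fun x => r x y / p x with ht_def
    have ht0 : ∀ x, 0 ≤ t x := fun x => div_nonneg (hr0 x y) (hp0 x)
    have ht1 : ∀ x, t x ≤ 1 := by
      intro x
      rcases eq_or_lt_of_le (hp0 x) with h | h
      · simp [ht_def, ← h]
      · exact div_le_one_of_le₀ (hrp x y) (hp0 x)
    have hkey := key_bound P (fun x => W x y) t hP hP1 (fun x => hW_nonneg x y) ht0 ht1 ℓ
    have hA_eq : ∑ x, P x * (W x y * t x) = (1/(k:ℝ)) * ∑ x, W x y * r x y := by
      rw [Finset.mul_sum]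
      refine Finset.sum_congr rfl fun x _ => ?_
      rcases eq_or_lt_of_le (hp0 x) with h | h
      · have hr : r x y = 0 := le_antisymm (h ▸ hrp x y) (hr0 x y)
        simp [hP_def, ht_def, ← h, hr]
      · rw [hP_def, ht_def]
        field_simp
    have hB_eq : ∑ x, P x * (1 - t x) = 1 - (∑ x, r x y) / k := by
      have : ∀ x, P x * (1 - t x) = (p x - r x y) / k := by
        intro x
        rcases eq_or_lt_of_le (hp0 x) with h | h
        · have hr : r x y = 0 := le_antisymm (h ▸ hrp x y) (hr0 x y)
          simp [hP_def, ht_def, ← h, hr]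
        · rw [hP_def, ht_def]
          field_simp
      rw [Finset.sum_congr rfl fun x _ => this x, ← Finset.sum_div,
        Finset.sum_sub_distrib, hpsum]
      field_simp
    have hBc : c ≤ ∑ x, P x * (1 - t x) := by
      rw [hB_eq, hc_def]
      have h2 : (∑ x, r x y) / (k:ℝ) ≤ 1 / k := by
        gcongr
        exact hry y
      linarith
    have hsum_le : ∑ i ∈ Finset.range ℓ, c^i ≤
        ∑ i ∈ Finset.range ℓ, (∑ x, P x * (1 - t x))^i :=
      Finset.sum_le_sum fun i _ => pow_le_pow_left₀ hc0 hBc i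
    have hA_nonneg : 0 ≤ (1/(k:ℝ)) * ∑ x, W x y * r x y := by
      apply mul_nonneg (by positivity)
      exact Finset.sum_nonneg fun x _ => mul_nonneg (hW_nonneg x y) (hr0 x y)
    calc (1 - c^ℓ) * ∑ x, W x y * r x y
        = ((1/(k:ℝ)) * ∑ x, W x y * r x y) * (k * (1 - c^ℓ)) := by
          field_simp
      _ = ((1/(k:ℝ)) * ∑ x, W x y * r x y) * ∑ i ∈ Finset.range ℓ, c^i := by rw [hgeo]
      _ ≤ ((1/(k:ℝ)) * ∑ x, W x y * r x y) *
            ∑ i ∈ Finset.range ℓ, (∑ x, P x * (1 - t x))^i :=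
          mul_le_mul_of_nonneg_left hsum_le hA_nonneg
      _ = (∑ x, P x * (W x y * t x)) * ∑ i ∈ Finset.range ℓ, (∑ x, P x * (1 - t x))^i := by
          rw [hA_eq]
      _ ≤ ∑ s : Fin ℓ → X, (∏ i, P (s i)) * ⨆ i, W (s i) y := hkey
  -- assemble
  have hsum_y : (1 - c^ℓ) * ∑ y, ∑ x, W x y * r x y ≤
      ∑ y, ∑ s : Fin ℓ → X, (∏ i, P (s i)) * ⨆ i, W (s i) y := by
    rw [Finset.mul_sum]
    exact Finset.sum_le_sum fun y _ => per_y y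
  have hswap : ∑ y, ∑ s : Fin ℓ → X, (∏ i, P (s i)) * ⨆ i, W (s i) y
      = ∑ s : Fin ℓ → X, (∏ i, P (s i)) * ∑ y, ⨆ i, W (s i) y := by
    rw [Finset.sum_comm]
    exact Finset.sum_congr rfl fun s _ => (Finset.mul_sum _ _ _).symm
  have hks : (k:ℝ) * SchanNS W k = ∑ y, ∑ x, W x y * r x y := by
    rw [← hopt, Finset.sum_comm]
    field_simp
  have hfinal : (k:ℝ) * (1 - c^ℓ) * SchanNS W k ≤
      ∑ s : Fin ℓ → X, (∏ i, P (s i)) * ∑ y, ⨆ i, W (s i) y := by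
    calc (k:ℝ) * (1 - c^ℓ) * SchanNS W k
        = (1 - c^ℓ) * ((k:ℝ) * SchanNS W k) := by ring
      _ = (1 - c^ℓ) * ∑ y, ∑ x, W x y * r x y := by rw [hks]
      _ ≤ ∑ y, ∑ s : Fin ℓ → X, (∏ i, P (s i)) * ⨆ i, W (s i) y := hsum_y
      _ = _ := hswap
  have hrw : ∑ s : Fin ℓ → X, (∏ i, p (s i) / k) * ((1 / (ℓ:ℝ)) * ∑ y, ⨆ i : Fin ℓ, W (s i) y)
      = (1/(ℓ:ℝ)) * ∑ s : Fin ℓ → X, (∏ i, P (s i)) * ∑ y, ⨆ i, W (s i) y := by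
    rw [Finset.mul_sum]
    exact Finset.sum_congr rfl fun s _ => by rw [hP_def]; ring
  rw [hrw]
  have := mul_le_mul_of_nonneg_left hfinal (le_of_lt (by positivity : (0:ℝ) < 1/(ℓ:ℝ)))
  calc ((k:ℝ)/ℓ) * (1 - c^ℓ) * SchanNS W k
      = (1/(ℓ:ℝ)) * ((k:ℝ) * (1 - c^ℓ) * SchanNS W k) := by ring
    _ ≤ _ := this
end

section
/- Key coupon-collector-type inequality used in random coding: if x_1 ≥ x_2 ≥ ... ≥ x_n ≥ 0 are reals, r_1,...,r_n ∈ [0,1] with ∑_i r_i ≤ 1, p_i ∈ [0,1] with r_i ≤ p_i and ∑_i p_i = k, and S consists of ℓ i.i.d. samples with probabilities p_i/k, then E[max_{i∈S} x_i] ≥ (1 − (1−1/k)^ℓ) ∑_i r_i x_i. -/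
open Finset

lemma telescope_Ico (f : ℕ → ℝ) {i n : ℕ} (h : i ≤ n) :
    ∑ m ∈ Finset.Ico i n, (f m - f (m+1)) = f i - f n := by
  rw [Finset.sum_Ico_eq_sum_range]
  simp_rw [show ∀ j:ℕ, i + j + 1 = i + (j+1) from fun j => by omega]
  rw [Finset.sum_range_sub' (fun j => f (i + j)), Nat.add_sub_cancel' h]
  simp

lemma key_scalar (k : ℝ) (hk : 1 ≤ k) (ℓ : ℕ) (q R : ℝ)
    (hq0 : 0 ≤ q) (hqk : q ≤ k) (hRq : R ≤ q) (hR1 : R ≤ 1) :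
    (1 - (1 - 1/k)^ℓ) * R ≤ 1 - (1 - q/k)^ℓ := by
  have hkpos : (0:ℝ) < k := lt_of_lt_of_le one_pos hk
  have hc0 : (0:ℝ) ≤ 1 - 1/k := by
    have : 1/k ≤ 1 := by rw [div_le_one hkpos]; exact hk
    linarith
  have hc1 : (1:ℝ) - 1/k ≤ 1 := by
    have : (0:ℝ) ≤ 1/k := by positivity
    linarith
  have hcl1 : (1 - 1/k)^ℓ ≤ 1 := pow_le_one₀ hc0 hc1
  rcases le_total q 1 with hq1 | hq1
  · have hconv := (convexOn_pow ℓ).2 (Set.mem_Ici.mpr hc0) (Set.mem_Ici.mpr zero_le_one)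
      hq0 (by linarith : (0:ℝ) ≤ 1 - q) (by ring)
    simp only [smul_eq_mul, one_pow, mul_one] at hconv
    have heq : q * (1 - 1/k) + (1 - q) = 1 - q/k := by field_simp; ring
    rw [heq] at hconv
    nlinarith
  · have h0 : (0:ℝ) ≤ 1 - q/k := by
      have : q/k ≤ 1 := by rw [div_le_one hkpos]; exact hqk
      linarith
    have h1 : 1 - q/k ≤ 1 - 1/k := by
      have : 1/k ≤ q/k := by apply div_le_div_of_nonneg_right <;> linarith
      linarith
    have := pow_le_pow_left₀ h0 h1 ℓ
    nlinarith

/-- coupon-collector-type inequality. If `x_1 ≥ ... ≥ x_n ≥ 0`,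
`r_i ∈ [0,1]` with `∑ r_i ≤ 1`, `p_i ∈ [0,1]` with `r_i ≤ p_i` and `∑ p_i = k`, and `S`
consists of `ℓ` i.i.d. samples with probabilities `p_i/k`, then
`E[max_{i∈S} x_i] ≥ (1 − (1−1/k)^ℓ) ∑_i r_i x_i`. -/
theorem coupon_collector_ineq (n : ℕ) (x r p : Fin n → ℝ)
    (hx_anti : ∀ i j : Fin n, i ≤ j → x j ≤ x i) (hx0 : ∀ i, 0 ≤ x i)
    (hr0 : ∀ i, 0 ≤ r i) (hr1 : ∀ i, r i ≤ 1) (hrsum : ∑ i, r i ≤ 1)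
    (hp0 : ∀ i, 0 ≤ p i) (hp1 : ∀ i, p i ≤ 1) (hrp : ∀ i, r i ≤ p i)
    (k : ℕ) (hk : 1 ≤ k) (hpsum : ∑ i, p i = k) (ℓ : ℕ) (hℓ : 1 ≤ ℓ) :
    (1 - (1 - 1 / (k : ℝ))^ℓ) * ∑ i, r i * x i ≤
      ∑ s : Fin ℓ → Fin n, (∏ j, p (s j) / k) * ⨆ j : Fin ℓ, x (s j) := by
  classical
  haveI : NeZero ℓ := ⟨by omega⟩
  have hk1 : (1:ℝ) ≤ (k:ℝ) := by exact_mod_cast hk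
  have hkpos : (0:ℝ) < k := by linarith
  set X : ℕ → ℝ := fun m => if h : m < n then x ⟨m, h⟩ else 0 with hX
  have hXn : ∀ m, n ≤ m → X m = 0 := fun m hm => dif_neg (by omega)
  have hX0 : ∀ m, 0 ≤ X m := by
    intro m; by_cases h : m < n
    · simp only [hX, dif_pos h]; exact hx0 _
    · simp only [hX, dif_neg h]; exact le_refl 0
  have hXanti : ∀ a b : ℕ, a ≤ b → X b ≤ X a := by
    intro a b hab
    by_cases hb : b < n
    · have ha : a < n := lt_of_le_of_lt hab hb
      simp only [hX, dif_pos hb, dif_pos ha]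
      exact hx_anti ⟨a, ha⟩ ⟨b, hb⟩ hab
    · rw [hXn b (le_of_not_gt hb)]; exact hX0 a
  have hXcoe : ∀ i : Fin n, X (i : ℕ) = x i := by
    intro i; simp only [hX, dif_pos i.isLt]
  -- layer cake
  have layer : ∀ a : ℕ, X a = ∑ m ∈ Finset.range n, if a ≤ m then (X m - X (m+1)) else 0 := by
    intro a
    rw [← Finset.sum_filter]
    have hfil : (Finset.range n).filter (fun m => a ≤ m) = Finset.Ico a n := by
      ext m; simp [Finset.mem_Ico, and_comm]
    rw [hfil]
    rcases le_total a n with h | h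
    · rw [telescope_Ico X h, hXn n le_rfl, sub_zero]
    · rw [Finset.Ico_eq_empty (by omega), Finset.sum_empty, hXn a h]
  -- sup formula
  have hsup : ∀ s : Fin ℓ → Fin n, (⨆ j, x (s j)) =
      ∑ m ∈ Finset.range n, if (∃ j, (s j : ℕ) ≤ m) then (X m - X (m+1)) else 0 := by
    intro s
    obtain ⟨j₀, -, hj₀⟩ := Finset.exists_mem_eq_inf' (Finset.univ_nonempty (α := Fin ℓ)) s
    have hmin : ∀ j, s j₀ ≤ s j := by
      intro j; rw [← hj₀]; exact Finset.inf'_le _ (Finset.mem_univ j)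
    have h1 : (⨆ j, x (s j)) = x (s j₀) := by
      apply le_antisymm
      · exact ciSup_le fun j => hx_anti _ _ (hmin j)
      · exact le_ciSup (f := fun j => x (s j)) (Set.Finite.bddAbove (Set.finite_range _)) j₀
    have h2 : ∀ m : ℕ, ((s j₀ : ℕ) ≤ m) ↔ (∃ j, (s j : ℕ) ≤ m) := by
      intro m
      constructor
      · intro h; exact ⟨j₀, h⟩
      · rintro ⟨j, hj⟩; exact le_trans (Fin.le_def.mp (hmin j)) hj
    rw [h1, ← hXcoe, layer]
    exact Finset.sum_congr rfl fun m _ => if_congr (h2 m) rfl rfl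
  set w : (Fin ℓ → Fin n) → ℝ := fun s => ∏ j, p (s j) / k with hw
  set q : ℕ → ℝ := fun m => ∑ i ∈ Finset.univ.filter (fun i : Fin n => (i:ℕ) ≤ m), p i with hqdef
  set ρ : ℕ → ℝ := fun m => ∑ i ∈ Finset.univ.filter (fun i : Fin n => (i:ℕ) ≤ m), r i with hρdef
  have hRHS : ∑ s : Fin ℓ → Fin n, w s * ⨆ j : Fin ℓ, x (s j)
      = ∑ m ∈ Finset.range n,
          (∑ s ∈ Finset.univ.filter (fun s : Fin ℓ → Fin n => ∃ j, (s j : ℕ) ≤ m), w s)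
            * (X m - X (m+1)) := by
    simp_rw [hsup, Finset.mul_sum, mul_ite, mul_zero]
    rw [Finset.sum_comm]
    refine Finset.sum_congr rfl fun m _ => ?_
    rw [← Finset.sum_filter, Finset.sum_mul]
  have htot : ∑ s : Fin ℓ → Fin n, w s = 1 := by
    rw [← Fintype.piFinset_univ]
    simp only [hw]
    rw [← Finset.prod_univ_sum (fun _ : Fin ℓ => (Finset.univ : Finset (Fin n)))
      (fun _ i => p i / (k:ℝ))]
    have h1 : ∑ i : Fin n, p i / (k:ℝ) = 1 := by
      rw [← Finset.sum_div, hpsum, div_self (ne_of_gt hkpos)]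
    simp only [h1, Finset.prod_const_one]
  have hWsum : ∀ m : ℕ,
      (∑ s ∈ Finset.univ.filter (fun s : Fin ℓ → Fin n => ∃ j, (s j : ℕ) ≤ m), w s)
        = 1 - (((k:ℝ) - q m)/k)^ℓ := by
    intro m
    have hcompl_set : Finset.univ.filter (fun s : Fin ℓ → Fin n => ¬ ∃ j, (s j : ℕ) ≤ m)
        = Fintype.piFinset (fun _ : Fin ℓ => Finset.univ.filter (fun i : Fin n => m < (i:ℕ))) := by
      ext s
      simp [Fintype.mem_piFinset, not_le]
    have hcompl : ∑ s ∈ Finset.univ.filter (fun s : Fin ℓ → Fin n => ¬ ∃ j, (s j : ℕ) ≤ m), w s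
        = (((k:ℝ) - q m)/k)^ℓ := by
      rw [hcompl_set]
      simp only [hw]
      rw [← Finset.prod_univ_sum (fun _ : Fin ℓ => Finset.univ.filter (fun i : Fin n => m < (i:ℕ)))
      (fun _ i => p i / (k:ℝ))]
      have h1 : ∑ i ∈ Finset.univ.filter (fun i : Fin n => m < (i:ℕ)), p i / (k:ℝ)
          = ((k:ℝ) - q m)/k := by
        rw [← Finset.sum_div]
        congr 1
        have hsplit := Finset.sum_filter_add_sum_filter_not Finset.univ
          (fun i : Fin n => (i:ℕ) ≤ m) p
        have hnot : Finset.univ.filter (fun i : Fin n => ¬ (i:ℕ) ≤ m)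
            = Finset.univ.filter (fun i : Fin n => m < (i:ℕ)) := by
          simp only [not_le]
        rw [hpsum, hnot] at hsplit
        rw [hqdef]
        linarith
      simp only [h1, Finset.prod_const, Finset.card_univ, Fintype.card_fin]
    have hsplit := Finset.sum_filter_add_sum_filter_not Finset.univ
      (fun s : Fin ℓ → Fin n => ∃ j, (s j:ℕ) ≤ m) w
    rw [htot] at hsplit
    rw [← hcompl]
    linarith
  have hLHS : ∑ i, r i * x i = ∑ m ∈ Finset.range n, ρ m * (X m - X (m+1)) := by
    have h1 : ∀ i : Fin n, r i * x i
        = ∑ m ∈ Finset.range n, if (i:ℕ) ≤ m then r i * (X m - X (m+1)) else 0 := by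
      intro i
      rw [← hXcoe i, layer (i:ℕ), Finset.mul_sum]
      exact Finset.sum_congr rfl fun m _ => by rw [mul_ite, mul_zero]
    simp_rw [h1]
    rw [Finset.sum_comm]
    refine Finset.sum_congr rfl fun m _ => ?_
    rw [← Finset.sum_filter, Finset.sum_mul]
  rw [hRHS, hLHS, Finset.mul_sum]
  apply Finset.sum_le_sum
  intro m _
  rw [hWsum m]
  have hy : 0 ≤ X m - X (m+1) := sub_nonneg.mpr (hXanti m (m+1) (by omega))
  have hq0 : 0 ≤ q m := Finset.sum_nonneg fun i _ => hp0 i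
  have hqk : q m ≤ (k:ℝ) := by
    rw [← hpsum]
    exact Finset.sum_le_sum_of_subset_of_nonneg (Finset.filter_subset _ _)
      fun i _ _ => hp0 i
  have hρq : ρ m ≤ q m := Finset.sum_le_sum fun i _ => hrp i
  have hρ1 : ρ m ≤ 1 := le_trans
    (Finset.sum_le_sum_of_subset_of_nonneg (Finset.filter_subset _ _) fun i _ _ => hr0 i)
    hrsum
  have key := key_scalar (k:ℝ) hk1 ℓ (q m) (ρ m) hq0 hqk hρq hρ1
  have heq : ((k:ℝ) - q m)/k = 1 - q m / k := by field_simp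
  rw [heq]
  calc (1 - (1 - 1/(k:ℝ))^ℓ) * (ρ m * (X m - X (m+1)))
      = ((1 - (1 - 1/(k:ℝ))^ℓ) * ρ m) * (X m - X (m+1)) := by ring
    _ ≤ (1 - (1 - q m/(k:ℝ))^ℓ) * (X m - X (m+1)) := mul_le_mul_of_nonneg_right key hy
end

section
/- Tightness construction, LP value: Let n = kt with integers k,t ≥ 1, X = [n], Y = the set of t-element subsets of X, and W(y|x) = 1/C(n−1,t−1) if x ∈ y and 0 otherwise. Then S^NS(W,k) = 1; in particular the feasible solution p_x = k/n for all x and r_{x,y} = k/n if x ∈ y (else 0) achieves LP objective value 1. -/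
open Finset

/-!
Every column `y` contributes at most `max W · ∑ₓ r x y ≤ max W` to the objective, so
`S^NS(W,k) ≤ |Y| · max W / k`. For the `t`-subset channel `max W = 1 / C(n-1,t-1)` and
`|Y| = C(n,t) = k · C(n-1,t-1)` because `n = kt`, so the bound is `1`. The uniform solution
`r x y = k/n · 1[x ∈ y]` fills every column exactly (`t · k/n = 1`) and attains it.
-/

section LP

variable {X Y : Type*} [Fintype X] [Fintype Y]

def IsNSFeasible (k : ℕ) (r : X → Y → ℝ) (p : X → ℝ) : Prop :=
  (∀ x y, 0 ≤ r x y) ∧ (∀ x y, r x y ≤ p x) ∧ (∀ x, p x ≤ 1) ∧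
    (∀ y, ∑ x, r x y ≤ 1) ∧ ∑ x, p x = k

noncomputable def nsObjective (W : X → Y → ℝ) (k : ℕ) (r : X → Y → ℝ) : ℝ :=
  (1 / k) * ∑ x, ∑ y, W x y * r x y

theorem SchanNS_eq_of_forall_le {W : X → Y → ℝ} {k : ℕ} {r : X → Y → ℝ} {p : X → ℝ}
    (h : IsNSFeasible k r p)
    (hmax : ∀ r' p', IsNSFeasible k r' p' → nsObjective W k r' ≤ nsObjective W k r) :
    SchanNS W k = nsObjective W k r := by
  obtain ⟨hr0, hrp, hp1, hcol, hsum⟩ := h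
  refine IsGreatest.csSup_eq ⟨⟨r, p, hr0, hrp, hp1, hcol, hsum, rfl⟩, ?_⟩
  rintro v ⟨r', p', h₁, h₂, h₃, h₄, h₅, rfl⟩
  exact hmax r' p' ⟨h₁, h₂, h₃, h₄, h₅⟩

theorem nsObjective_le_of_le {W : X → Y → ℝ} (k : ℕ) {r : X → Y → ℝ} {c : ℝ} (hc : 0 ≤ c)
    (hW : ∀ x y, W x y ≤ c) (hr0 : ∀ x y, 0 ≤ r x y) (hcol : ∀ y, ∑ x, r x y ≤ 1) :
    nsObjective W k r ≤ Fintype.card Y * c / k := by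
  have hcolumn : ∀ y, ∑ x, W x y * r x y ≤ c := fun y =>
    calc ∑ x, W x y * r x y ≤ ∑ x, c * r x y :=
          sum_le_sum fun x _ => mul_le_mul_of_nonneg_right (hW x y) (hr0 x y)
      _ = c * ∑ x, r x y := (mul_sum ..).symm
      _ ≤ c * 1 := mul_le_mul_of_nonneg_left (hcol y) hc
      _ = c := mul_one c
  calc nsObjective W k r = (1 / k) * ∑ y, ∑ x, W x y * r x y := by
        rw [nsObjective, sum_comm]
    _ ≤ (1 / k) * ∑ _ : Y, c := by gcongr with y; exact hcolumn y
    _ = Fintype.card Y * c / k := by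
        rw [sum_const, card_univ, nsmul_eq_mul]; ring

theorem nsObjective_eq_of_forall_sum_eq {W : X → Y → ℝ} (k : ℕ) {r : X → Y → ℝ} {c : ℝ}
    (hcol : ∀ y, ∑ x, W x y * r x y = c) :
    nsObjective W k r = Fintype.card Y * c / k := by
  rw [nsObjective, sum_comm, sum_congr rfl fun y _ => hcol y, sum_const, card_univ,
    nsmul_eq_mul]
  ring

theorem SchanNS_eq_of_forall_sum_eq {W : X → Y → ℝ} {k : ℕ} {r : X → Y → ℝ} {p : X → ℝ}
    {c : ℝ} (hc : 0 ≤ c) (hW : ∀ x y, W x y ≤ c) (h : IsNSFeasible k r p)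
    (hcol : ∀ y, ∑ x, W x y * r x y = c) :
    SchanNS W k = Fintype.card Y * c / k := by
  have hopt : nsObjective W k r = Fintype.card Y * c / k := nsObjective_eq_of_forall_sum_eq k hcol
  rw [SchanNS_eq_of_forall_le h fun r' _ h' => hopt ▸ nsObjective_le_of_le k hc hW h'.1 h'.2.2.2.1,
    hopt]

end LP

theorem sum_ite_mem_const {α R : Type*} [Fintype α] [DecidableEq α] [NonAssocSemiring R]
    (s : Finset α) (a : R) :
    ∑ x, (if x ∈ s then a else 0) = s.card * a := by
  simp only [sum_ite_mem, univ_inter, sum_const, nsmul_eq_mul]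

theorem Nat.mul_choose_pred_eq (n : ℕ) {t : ℕ} (ht : 1 ≤ t) :
    n * (n - 1).choose (t - 1) = n.choose t * t := by
  obtain ⟨m, rfl⟩ : ∃ m, t = m + 1 := ⟨t - 1, by omega⟩
  cases n with
  | zero => simp
  | succ n => simpa using Nat.add_one_mul_choose_eq n m

theorem Nat.choose_eq_mul_choose_pred {k t n : ℕ} (ht : 1 ≤ t) (hn : n = k * t) :
    n.choose t = k * (n - 1).choose (t - 1) := by
  apply Nat.eq_of_mul_eq_mul_right ht
  rw [← Nat.mul_choose_pred_eq n ht, hn]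
  ring

section Uniform

variable {k t n : ℕ}

theorem sum_ite_mem_div_eq_one (hk : 1 ≤ k) (ht : 1 ≤ t) (hn : n = k * t)
    (y : {s : Finset (Fin n) // s.card = t}) :
    ∑ x, (if x ∈ y.1 then (k : ℝ) / n else 0) = 1 := by
  have hkR : (k : ℝ) ≠ 0 := by positivity
  have htR : (t : ℝ) ≠ 0 := by positivity
  rw [sum_ite_mem_const, y.2, hn, Nat.cast_mul]
  field_simp

theorem isNSFeasible_uniform (hk : 1 ≤ k) (ht : 1 ≤ t) (hn : n = k * t) {p : Fin n → ℝ}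
    {r : Fin n → {s : Finset (Fin n) // s.card = t} → ℝ} (hp : ∀ x, p x = (k : ℝ) / n)
    (hr : ∀ x y, r x y = if x ∈ y.1 then (k : ℝ) / n else 0) :
    IsNSFeasible k r p := by
  have hnR : (n : ℝ) = k * t := by rw [hn, Nat.cast_mul]
  have hkR : (0 : ℝ) < k := by exact_mod_cast hk
  refine ⟨fun x y => ?_, fun x y => ?_, fun x => ?_, fun y => ?_, ?_⟩
  · rw [hr]; split_ifs <;> positivity
  · rw [hr, hp]; split_ifs
    exacts [le_rfl, by positivity]
  · rw [hp, hnR, div_le_one (by positivity)]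
    exact le_mul_of_one_le_right hkR.le (by exact_mod_cast ht)
  · simp only [hr, sum_ite_mem_div_eq_one hk ht hn y, le_refl]
  · simp only [hp, sum_const, card_univ, Fintype.card_fin, nsmul_eq_mul, hnR]
    field_simp

end Uniform

/-- tightness construction, LP value. With `n = kt`, `X = [n]`, `Y` the
`t`-subsets of `X` and `W(y|x) = 1/C(n−1,t−1)·1[x∈y]`, we have `S^NS(W,k) = 1`; moreover
`p_x = k/n`, `r_{x,y} = (k/n)·1[x∈y]` is feasible with LP objective value `1`. -/
theorem tightness_lp_value (k t n : ℕ) (hk : 1 ≤ k) (ht : 1 ≤ t) (hn : n = k * t)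
    (W : Fin n → {s : Finset (Fin n) // s.card = t} → ℝ)
    (hW : ∀ x y, W x y = if x ∈ y.1 then (1 : ℝ) / ((n - 1).choose (t - 1)) else 0)
    (p : Fin n → ℝ) (hp : ∀ x, p x = (k : ℝ) / n)
    (r : Fin n → {s : Finset (Fin n) // s.card = t} → ℝ)
    (hr : ∀ x y, r x y = if x ∈ y.1 then (k : ℝ) / n else 0) :
    SchanNS W k = 1 ∧
      (∀ x y, 0 ≤ r x y) ∧ (∀ x y, r x y ≤ p x) ∧ (∀ x, p x ≤ 1) ∧
      (∀ y, ∑ x, r x y ≤ 1) ∧ (∑ x, p x = k) ∧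
      (1 / (k : ℝ)) * ∑ x, ∑ y, W x y * r x y = 1 := by
  have hCR : (0 : ℝ) < (n - 1).choose (t - 1) := Nat.cast_pos.2 <| Nat.choose_pos <| by
    have := Nat.le_mul_of_pos_left t hk; omega
  have hWle : ∀ x y, W x y ≤ 1 / (n - 1).choose (t - 1) := fun x y => by
    rw [hW]; split_ifs
    exacts [le_rfl, by positivity]
  have hcol : ∀ y, ∑ x, W x y * r x y = 1 / (n - 1).choose (t - 1) := fun y => by
    simp only [hW, hr, ite_zero_mul_ite_zero, and_self, ← mul_ite_zero, ← mul_sum,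
      sum_ite_mem_div_eq_one hk ht hn y, mul_one]
  have hvalue : Fintype.card {s : Finset (Fin n) // s.card = t} *
      (1 / (n - 1).choose (t - 1) : ℝ) / k = 1 := by
    rw [Fintype.card_finset_len, Fintype.card_fin, Nat.choose_eq_mul_choose_pred ht hn,
      Nat.cast_mul]
    field_simp
  have hfeas := isNSFeasible_uniform hk ht hn hp hr
  have hS : SchanNS W k = 1 := by
    rw [SchanNS_eq_of_forall_sum_eq (by positivity) hWle hfeas hcol, hvalue]
  obtain ⟨hr0, hrp, hp1, hcolr, hsump⟩ := hfeas
  exact ⟨hS, hr0, hrp, hp1, hcolr, hsump, (nsObjective_eq_of_forall_sum_eq k hcol).trans hvalue⟩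
end

section
/- Tightness construction, exact success probability: for the channel W on X = [n], n = kt, Y = t-subsets of [n], W(y|x) = 1/C(n−1,t−1)·1[x∈y], and any 1 ≤ ℓ ≤ n, the maximum success probability is S(W,ℓ) = (k/ℓ)(1 − C(n−ℓ,t)/C(n,t)). -/
/-!
For a fixed output `y`, `W(·|y)` is the constant `1 / C(n-1,t-1)` on `y` and `0` off it, so
`max_{x ∈ S} W(y|x)` is that constant if `y` meets `S` and `0` otherwise. Hence every `ℓ`-set `S`
achieves the same value `(C(n,t) - C(n-ℓ,t)) / C(n-1,t-1)`, the `t`-sets avoiding `S` being the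
`t`-subsets of its complement; and `k · C(n-1,t-1) = C(n,t)` because `n = kt`.
-/

open Finset

/- In `ℝ`, `⨆ _ : x ∈ S, _` is `sSup ∅ = 0` for `x ∉ S`, which is why `c` must be nonnegative. -/
theorem Real.iSup_mem_ite_mem {α : Type*} [DecidableEq α] (S T : Finset α) {c : ℝ}
    (hc : 0 ≤ c) : (⨆ x ∈ S, if x ∈ T then c else 0) = if Disjoint S T then 0 else c := by
  have hnonneg : ∀ x, 0 ≤ ⨆ _ : x ∈ S, if x ∈ T then c else 0 :=
    fun x ↦ Real.iSup_nonneg fun _ ↦ by split_ifs <;> simp [hc]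
  have hle : ∀ x, (⨆ _ : x ∈ S, if x ∈ T then c else 0) ≤ c :=
    fun x ↦ Real.iSup_le (fun _ ↦ by split_ifs <;> simp [hc]) hc
  split_ifs with h
  · refine le_antisymm (Real.iSup_le (fun x ↦ Real.iSup_le (fun hx ↦ ?_) le_rfl) le_rfl)
      (Real.iSup_nonneg hnonneg)
    simp [disjoint_left.1 h hx]
  · obtain ⟨x, hxS, hxT⟩ := not_disjoint_iff.1 h
    have hbdd : BddAbove (Set.range fun x ↦ ⨆ _ : x ∈ S, if x ∈ T then c else 0) :=
      ⟨c, Set.forall_mem_range.2 hle⟩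
    refine le_antisymm (Real.iSup_le hle hc) (le_ciSup_of_le hbdd x ?_)
    rw [ciSup_pos hxS, if_pos hxT]

section FinsetLen

variable {α : Type*} [Fintype α] [DecidableEq α] (S : Finset α) (t : ℕ)

theorem card_filter_disjoint_finset_len :
    #{y : {s : Finset α // #s = t} | Disjoint S y.1} = (Fintype.card α - #S).choose t := by
  rw [← card_compl, ← card_powersetCard]
  refine card_nbij (·.1) (fun y hy ↦ ?_) (fun y _ z _ h ↦ Subtype.ext h) (fun s hs ↦ ?_)
  · rw [coe_filter, Set.mem_ofPred_eq] at hy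
    exact mem_powersetCard.2 ⟨subset_compl_iff_disjoint_left.2 hy.2, y.2⟩
  · obtain ⟨hsS, hst⟩ := mem_powersetCard.1 (mem_coe.1 hs)
    exact ⟨⟨s, hst⟩, by simpa using subset_compl_iff_disjoint_left.1 hsS, rfl⟩

theorem card_filter_not_disjoint_finset_len :
    #{y : {s : Finset α // #s = t} | ¬Disjoint S y.1} =
      (Fintype.card α).choose t - (Fintype.card α - #S).choose t := by
  have h := card_filter_add_card_filter_not (s := univ) fun y : {s : Finset α // #s = t} ↦
    Disjoint S y.1
  rw [card_univ, Fintype.card_finset_len, card_filter_disjoint_finset_len] at h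
  omega

theorem sum_finset_len_iSup_mem_ite_mem {c : ℝ} (hc : 0 ≤ c) :
    ∑ y : {s : Finset α // #s = t}, (⨆ x ∈ S, if x ∈ y.1 then c else 0) =
      c * (((Fintype.card α).choose t : ℝ) - (Fintype.card α - #S).choose t) := by
  have hle : (Fintype.card α - #S).choose t ≤ (Fintype.card α).choose t :=
    Nat.choose_le_choose t (Nat.sub_le _ _)
  simp_rw [Real.iSup_mem_ite_mem S _ hc]
  rw [sum_ite, sum_const_zero, zero_add, sum_const, card_filter_not_disjoint_finset_len,
    nsmul_eq_mul, Nat.cast_sub hle, mul_comm]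

end FinsetLen

theorem Nat.choose_pred_mul_eq_choose (k : ℕ) {t : ℕ} (ht : 1 ≤ t) :
    (k * t - 1).choose (t - 1) * k = (k * t).choose t := by
  obtain ⟨s, rfl⟩ : ∃ s, t = s + 1 := ⟨t - 1, by omega⟩
  rcases k with _ | k
  · simp
  · have h := Nat.add_one_mul_choose_eq ((k + 1) * (s + 1) - 1) s
    rw [Nat.sub_add_cancel (by positivity : 0 < (k + 1) * (s + 1))] at h
    refine Nat.eq_of_mul_eq_mul_right s.add_one_pos ?_
    rw [Nat.add_sub_cancel, ← h]
    ring

theorem tightness_success_prob_general (k t n : ℕ) (hk : 1 ≤ k) (ht : 1 ≤ t) (hn : n = k * t)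
    (W : Fin n → {s : Finset (Fin n) // s.card = t} → ℝ)
    (hW : ∀ x y, W x y = if x ∈ y.1 then (1 : ℝ) / ((n - 1).choose (t - 1)) else 0)
    (ℓ : ℕ) (hℓn : ℓ ≤ n) :
    (1 / (ℓ : ℝ)) *
        sSup { v : ℝ | ∃ S : Finset (Fin n), S.card = ℓ ∧ v = ∑ y, ⨆ x ∈ S, W x y } =
      ((k : ℝ) / ℓ) * (1 - ((n - ℓ).choose t : ℝ) / (n.choose t : ℝ)) := by
  have hchoose : (n.choose t : ℝ) ≠ 0 :=
    Nat.cast_ne_zero.2 (Nat.choose_pos (hn ▸ Nat.le_mul_of_pos_left t hk)).ne'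
  have hc : (1 : ℝ) / ((n - 1).choose (t - 1)) = k / n.choose t := by
    rw [hn, ← Nat.choose_pred_mul_eq_choose k ht, Nat.cast_mul,
      div_mul_cancel_right₀ (Nat.cast_ne_zero.2 (by omega)), one_div]
  have hval : ∀ S : Finset (Fin n), #S = ℓ →
      ∑ y, ⨆ x ∈ S, W x y = k * (1 - ((n - ℓ).choose t : ℝ) / n.choose t) := by
    intro S hS
    simp only [hW]
    rw [sum_finset_len_iSup_mem_ite_mem S t (by positivity), Fintype.card_fin, hS, hc]
    field_simp
  have hset : { v : ℝ | ∃ S : Finset (Fin n), S.card = ℓ ∧ v = ∑ y, ⨆ x ∈ S, W x y } =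
      {k * (1 - ((n - ℓ).choose t : ℝ) / n.choose t)} := by
    ext v
    constructor
    · rintro ⟨S, hS, rfl⟩
      exact hval S hS
    · rintro rfl
      obtain ⟨S, -, hS⟩ := exists_subset_card_eq (s := (univ : Finset (Fin n))) (by simpa)
      exact ⟨S, hS, (hval S hS).symm⟩
  rw [hset, csSup_singleton]
  ring

/-- tightness construction, exact success probability. For the channel on
`X = [n]`, `n = kt`, `Y` the `t`-subsets of `[n]`, `W(y|x) = 1/C(n−1,t−1)·1[x∈y]`, and any
`1 ≤ ℓ ≤ n`, the maximum success probability is `S(W,ℓ) = (k/ℓ)(1 − C(n−ℓ,t)/C(n,t))`. -/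
theorem tightness_success_prob (k t n : ℕ) (hk : 1 ≤ k) (ht : 1 ≤ t) (hn : n = k * t)
    (W : Fin n → {s : Finset (Fin n) // s.card = t} → ℝ)
    (hW : ∀ x y, W x y = if x ∈ y.1 then (1 : ℝ) / ((n - 1).choose (t - 1)) else 0)
    (ℓ : ℕ) (hℓ : 1 ≤ ℓ) (hℓn : ℓ ≤ n) :
    (1 / (ℓ : ℝ)) *
        sSup { v : ℝ | ∃ S : Finset (Fin n), S.card = ℓ ∧ v = ∑ y, ⨆ x ∈ S, W x y } =
      ((k : ℝ) / ℓ) * (1 - ((n - ℓ).choose t : ℝ) / (n.choose t : ℝ)) :=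
  tightness_success_prob_general k t n hk ht hn W hW ℓ hℓn
end

section
/- Hardness reduction correctness: given a set system {T_x}_{x∈X} with each T_x ⊆ Y of size exactly d, define the channel W(y|x) = 1/d if y ∈ T_x and 0 otherwise. Then for every S ⊆ X, |⋃_{x∈S} T_x| = d · ∑_{y∈Y} max_{x∈S} W(y|x); hence max_{|S|≤k} |⋃_{x∈S} T_x| = d·k·S(W,k). -/
open Finset

/-- hardness reduction correctness. Given sets `T_x ⊆ Y` with `|T_x| = d`
and the channel `W(y|x) = (1/d)·1[y ∈ T_x]`, for every `S ⊆ X` we have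
`|⋃_{x∈S} T_x| = d · ∑_y max_{x∈S} W(y|x)`, and hence
`max_{|S|≤k} |⋃_{x∈S} T_x| = d·k·S(W,k)`. -/
theorem coverage_reduction {X Y : Type*} [Fintype X] [Fintype Y] [DecidableEq Y]
    (d : ℕ) (hd : 1 ≤ d) (T : X → Finset Y) (hT : ∀ x, (T x).card = d)
    (W : X → Y → ℝ) (hW : ∀ x y, W x y = if y ∈ T x then (1 : ℝ) / d else 0)
    (k : ℕ) (hk : 1 ≤ k) :
    (∀ S : Finset X, ((S.biUnion T).card : ℝ) = d * ∑ y, ⨆ x ∈ S, W x y) ∧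
      sSup { v : ℝ | ∃ S : Finset X, S.card ≤ k ∧ v = ((S.biUnion T).card : ℝ) } =
        d * k * Schan W k := by
  have hd0 : (0:ℝ) < d := by exact_mod_cast Nat.lt_of_lt_of_le Nat.zero_lt_one hd
  have hdne : (d:ℝ) ≠ 0 := ne_of_gt hd0
  have hinv : (0:ℝ) ≤ 1 / d := by positivity
  -- key pointwise identity
  have hsup : ∀ (S : Finset X) (y : Y),
      (⨆ x ∈ S, W x y) = if y ∈ S.biUnion T then (1:ℝ)/d else 0 := by
    intro S y
    by_cases hy : y ∈ S.biUnion T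
    · obtain ⟨x0, hx0, hyx0⟩ := Finset.mem_biUnion.1 hy
      rw [if_pos hy]
      apply le_antisymm
      · apply Real.iSup_le _ hinv
        intro x
        apply Real.iSup_le _ hinv
        intro _
        rw [hW]
        split <;> simp [hinv]
      · have hb : BddAbove (Set.range fun x : X => ⨆ _ : x ∈ S, W x y) :=
          Set.Finite.bddAbove (Set.finite_range _)
        refine le_ciSup_of_le hb x0 ?_
        rw [ciSup_pos hx0, hW, if_pos hyx0]
    · rw [if_neg hy]
      apply le_antisymm
      · apply Real.iSup_le _ le_rfl
        intro x
        apply Real.iSup_le _ le_rfl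
        intro hx
        rw [hW]
        split_ifs with h
        · exact absurd (Finset.mem_biUnion.2 ⟨x, hx, h⟩) hy
        · exact le_rfl
      · apply Real.iSup_nonneg
        intro x
        apply Real.iSup_nonneg
        intro _
        rw [hW]; split <;> simp [hinv]
  have part1 : ∀ S : Finset X, ((S.biUnion T).card : ℝ) = d * ∑ y, ⨆ x ∈ S, W x y := by
    intro S
    have : (∑ y, ⨆ x ∈ S, W x y) = (S.biUnion T).card * ((1:ℝ)/d) := by
      simp only [hsup S]
      rw [Finset.sum_ite_mem, Finset.univ_inter, Finset.sum_const, nsmul_eq_mul]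
    rw [this]
    field_simp
  refine ⟨part1, ?_⟩
  -- part 2
  set A : Set ℝ := { v : ℝ | ∃ S : Finset X, S.card ≤ k ∧ v = ∑ y, ⨆ x ∈ S, W x y } with hA
  set B : Set ℝ := { v : ℝ | ∃ S : Finset X, S.card ≤ k ∧ v = ((S.biUnion T).card : ℝ) } with hB
  have hAne : A.Nonempty := ⟨_, ∅, by simp, rfl⟩
  have hAfin : A.Finite := by
    apply Set.Finite.subset (Set.finite_range fun S : Finset X => ∑ y, ⨆ x ∈ S, W x y)
    rintro v ⟨S, -, rfl⟩
    exact ⟨S, rfl⟩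
  have hmem : sSup A ∈ A := hAne.csSup_mem hAfin
  have hub : ∀ v ∈ A, v ≤ sSup A := fun v hv =>
    le_csSup hAfin.bddAbove hv
  have hBgreat : IsGreatest B ((d:ℝ) * sSup A) := by
    constructor
    · obtain ⟨S, hS, hv⟩ := hmem
      exact ⟨S, hS, by rw [part1 S, ← hv]⟩
    · rintro v ⟨S, hS, rfl⟩
      rw [part1 S]
      exact mul_le_mul_of_nonneg_left (hub _ ⟨S, hS, rfl⟩) (le_of_lt hd0)
  rw [hBgreat.csSup_eq]
  rw [Schan]
  have hkne : (k:ℝ) ≠ 0 := by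
    have : 0 < k := Nat.lt_of_lt_of_le Nat.zero_lt_one hk
    positivity
  field_simp
  ring
end

section
/- Non-signaling LP equals the box formulation: for k ≤ |X|, the maximum of (1/k)∑_{x,y,i} W(y|x) P(x,i|i,y) over non-signaling boxes P(x,j|i,y) (i.e., conditional distributions on X×[k] given inputs [k]×Y whose marginal on x is independent of y and whose marginal on j is independent of i) equals S^NS(W,k), the value of the LP: maximize (1/k)∑_{x,y} W(y|x) r_{x,y} subject to ∑_x r_{x,y} ≤ 1 ∀y, ∑_x p_x = k, 0 ≤ r_{x,y} ≤ p_x ≤ 1. -/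
/-!
A non-signaling box `P` gives an LP point `r x y = ∑ i, P(x,i|i,y)` of the same value: by
non-signaling on Bob's side `∑ x, r x y = ∑ i, P_B(i|y) = 1`, and by non-signaling on Alice's
side `r x y ≤ q x := ∑ i, P_A(x|i)`, where `∑ x, q x = k`; raising `min q 1` to total mass `k`
gives `p`. Conversely, an LP point can be raised to one with `∑ x, r x y = 1` without losing
value, and for such a point the box `P(x,j|i,y) = r x y / k` if `i = j`,
`(p x - r x y) / (k (k - 1))` otherwise, is non-signaling with marginals `p x / k` and `1 / k`.
-/

open Finset

theorem exists_le_le_sum_eq {X : Type*} [Fintype X] {a b : X → ℝ} (hab : ∀ x, a x ≤ b x)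
    {c : ℝ} (ha : ∑ x, a x ≤ c) (hb : c ≤ ∑ x, b x) :
    ∃ p : X → ℝ, (∀ x, a x ≤ p x) ∧ (∀ x, p x ≤ b x) ∧ ∑ x, p x = c := by
  have hcont : ContinuousOn (fun t : ℝ => ∑ x, (a x + t * (b x - a x))) (Set.Icc 0 1) := by
    fun_prop
  obtain ⟨t, ⟨ht0, ht1⟩, hsum⟩ := intermediate_value_Icc zero_le_one hcont
    ⟨by simpa using ha, by simpa using hb⟩
  refine ⟨fun x => a x + t * (b x - a x), fun x => ?_, fun x => ?_, hsum⟩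
  · nlinarith [hab x]
  · nlinarith [hab x]

theorem sum_ite_eq_add_mul {ι : Type*} [Fintype ι] [DecidableEq ι] (i : ι) (a b : ℝ) :
    ∑ j, (if i = j then a else b) = a + (Fintype.card ι - 1) * b := by
  have hcard : 1 ≤ Fintype.card ι := Fintype.card_pos_iff.2 ⟨i⟩
  rw [← add_sum_erase _ _ (mem_univ i), if_pos rfl,
    sum_congr rfl fun j hj => if_neg (ne_of_mem_erase hj).symm]
  simp [card_erase_of_mem, Nat.cast_sub hcard]

section NonSignaling

variable {ι X Y : Type*} [Fintype ι] [Fintype X]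

/-- `P i y x j` is the probability `P(x, j | i, y)` of the outputs `x`, `j` on the inputs `i`,
`y`. -/
structure IsNonSignalingBox (P : ι → Y → X → ι → ℝ) : Prop where
  nonneg : ∀ i y x j, 0 ≤ P i y x j
  sum_eq_one : ∀ i y, ∑ x, ∑ j, P i y x j = 1
  marginal_x : ∃ PA : ι → X → ℝ, ∀ i y x, ∑ j, P i y x j = PA i x
  marginal_j : ∃ PB : Y → ι → ℝ, ∀ i y j, ∑ x, P i y x j = PB y j

theorem sum_sum_sum_mul_diag [Fintype Y] (W : X → Y → ℝ) (P : ι → Y → X → ι → ℝ) :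
    ∑ i, ∑ x, ∑ y, W x y * P i y x i = ∑ x, ∑ y, W x y * ∑ i, P i y x i := by
  simp only [mul_sum]
  rw [sum_comm]
  exact sum_congr rfl fun x _ => sum_comm

namespace IsNonSignalingBox

variable {P : ι → Y → X → ι → ℝ}

theorem sum_diag_eq_one [Nonempty ι] (hP : IsNonSignalingBox P) (y : Y) :
    ∑ x, ∑ i, P i y x i = 1 := by
  obtain ⟨PB, hPB⟩ := hP.marginal_j
  obtain ⟨i₀⟩ := ‹Nonempty ι›
  calc ∑ x, ∑ i, P i y x i = ∑ i, ∑ x, P i₀ y x i := by rw [sum_comm]; simp only [hPB]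
    _ = 1 := by rw [sum_comm]; exact hP.sum_eq_one i₀ y

theorem sum_diag_le_marginal (hP : IsNonSignalingBox P) (y y' : Y) (x : X) :
    ∑ i, P i y x i ≤ ∑ i, ∑ j, P i y' x j := by
  obtain ⟨PA, hPA⟩ := hP.marginal_x
  calc ∑ i, P i y x i ≤ ∑ i, ∑ j, P i y x j :=
        sum_le_sum fun i _ => single_le_sum (fun j _ => hP.nonneg i y x j) (mem_univ i)
    _ = ∑ i, ∑ j, P i y' x j := by simp only [hPA]

theorem exists_diag_le_sum_eq_card [Nonempty ι] (hP : IsNonSignalingBox P)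
    (hcard : Fintype.card ι ≤ Fintype.card X) :
    ∃ p : X → ℝ, (∀ x y, ∑ i, P i y x i ≤ p x) ∧ (∀ x, p x ≤ 1) ∧
      ∑ x, p x = Fintype.card ι := by
  obtain ⟨a, ha, ha_le_one, ha_sum⟩ : ∃ a : X → ℝ, (∀ x y, ∑ i, P i y x i ≤ a x) ∧
      (∀ x, a x ≤ 1) ∧ ∑ x, a x ≤ Fintype.card ι := by
    rcases isEmpty_or_nonempty Y with hY | ⟨⟨y₀⟩⟩
    · exact ⟨0, fun _ y => isEmptyElim y, fun _ => zero_le_one, by simp⟩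
    refine ⟨fun x => min (∑ i, ∑ j, P i y₀ x j) 1, fun x y => le_min
      (hP.sum_diag_le_marginal y y₀ x) ?_, fun x => min_le_right _ _, ?_⟩
    · calc ∑ i, P i y x i ≤ ∑ x', ∑ i, P i y x' i :=
            single_le_sum (f := fun x' => ∑ i, P i y x' i)
              (fun x' _ => sum_nonneg fun i _ => hP.nonneg i y x' i) (mem_univ x)
        _ = 1 := hP.sum_diag_eq_one y
    · calc ∑ x, min (∑ i, ∑ j, P i y₀ x j) 1 ≤ ∑ x, ∑ i, ∑ j, P i y₀ x j :=
            sum_le_sum fun x _ => min_le_left _ _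
        _ = Fintype.card ι := by rw [sum_comm]; simp [hP.sum_eq_one]
  obtain ⟨p, hap, hp_le_one, hp_sum⟩ :=
    exists_le_le_sum_eq ha_le_one ha_sum (by simpa using hcard)
  exact ⟨p, fun x y => (ha x y).trans (hap x), hp_le_one, hp_sum⟩

end IsNonSignalingBox

theorem exists_tight_of_sum_le_one {r : X → Y → ℝ} {p : X → ℝ}
    (hrp : ∀ x y, r x y ≤ p x) (hr : ∀ y, ∑ x, r x y ≤ 1) (hp : 1 ≤ ∑ x, p x) :
    ∃ s : X → Y → ℝ, (∀ x y, r x y ≤ s x y) ∧ (∀ x y, s x y ≤ p x) ∧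
      ∀ y, ∑ x, s x y = 1 := by
  choose s hrs hsp hs using fun y =>
    exists_le_le_sum_eq (fun x => hrp x y) (hr y) hp
  exact ⟨fun x y => s y x, fun x y => hrs y x, fun x y => hsp y x, hs⟩

variable [DecidableEq ι]

noncomputable def boxOfLP (s : X → Y → ℝ) (p : X → ℝ) : ι → Y → X → ι → ℝ :=
  fun i y x j => if i = j then s x y / Fintype.card ι
    else (p x - s x y) / (Fintype.card ι * (Fintype.card ι - 1))

section boxOfLP

variable [Nonempty ι] {s : X → Y → ℝ} {p : X → ℝ}

theorem sum_sum_sum_mul_boxOfLP_diag [Fintype Y] (W : X → Y → ℝ) :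
    ∑ i : ι, ∑ x, ∑ y, W x y * boxOfLP s p i y x i = ∑ x, ∑ y, W x y * s x y := by
  have hcard : (Fintype.card ι : ℝ) ≠ 0 := by positivity
  have hdiag (x : X) (y : Y) : ∑ i : ι, boxOfLP s p i y x i = s x y := by
    simp [boxOfLP, mul_div_cancel₀ _ hcard]
  simp only [sum_sum_sum_mul_diag, hdiag]

theorem boxOfLP_marginal_x (hsp : ∀ x y, s x y ≤ p x) (hs : ∀ y, ∑ x, s x y = 1)
    (hp : ∑ x, p x = Fintype.card ι) (i : ι) (y : Y) (x : X) :
    ∑ j, boxOfLP s p i y x j = p x / Fintype.card ι := by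
  simp only [boxOfLP, sum_ite_eq_add_mul]
  rcases eq_or_ne (Fintype.card ι : ℝ) 1 with hcard | hcard
  · -- for `k = 1` the constraints force `s = p`, which absorbs the junk value of `_ / 0`
    have hsum : ∑ x', (p x' - s x' y) = 0 := by rw [sum_sub_distrib, hp, hs, hcard, sub_self]
    have hpx := (sum_eq_zero_iff_of_nonneg fun x' _ => sub_nonneg.2 (hsp x' y)).1 hsum x
      (mem_univ x)
    rw [hcard, sub_eq_zero.1 hpx]
    ring
  · have hcard' : (Fintype.card ι : ℝ) - 1 ≠ 0 := sub_ne_zero.2 hcard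
    field_simp
    ring

theorem boxOfLP_marginal_j (hs : ∀ y, ∑ x, s x y = 1) (hp : ∑ x, p x = Fintype.card ι)
    (i : ι) (y : Y) (j : ι) :
    ∑ x, boxOfLP s p i y x j = 1 / Fintype.card ι := by
  by_cases hij : i = j
  · simp [boxOfLP, hij, ← sum_div, hs]
  · have hcard : (Fintype.card ι : ℝ) - 1 ≠ 0 := by
      have := Fintype.one_lt_card_iff.2 ⟨i, j, hij⟩
      rw [sub_ne_zero]; exact_mod_cast this.ne'
    simp only [boxOfLP, if_neg hij, ← sum_div, sum_sub_distrib, hp, hs]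
    field_simp

theorem isNonSignalingBox_boxOfLP (hs0 : ∀ x y, 0 ≤ s x y) (hsp : ∀ x y, s x y ≤ p x)
    (hs : ∀ y, ∑ x, s x y = 1) (hp : ∑ x, p x = Fintype.card ι) :
    IsNonSignalingBox (boxOfLP s p : ι → Y → X → ι → ℝ) where
  nonneg i y x j := by
    have hcard : (1 : ℝ) ≤ Fintype.card ι := by exact_mod_cast Fintype.card_pos
    unfold boxOfLP
    split_ifs
    · exact div_nonneg (hs0 x y) (by positivity)
    · exact div_nonneg (sub_nonneg.2 (hsp x y)) (mul_nonneg (by positivity) (by linarith))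
  sum_eq_one i y := by
    simp only [boxOfLP_marginal_x hsp hs hp, ← sum_div, hp]
    exact div_self (by positivity)
  marginal_x := ⟨fun _ x => p x / Fintype.card ι, boxOfLP_marginal_x hsp hs hp⟩
  marginal_j := ⟨fun _ _ => 1 / Fintype.card ι, boxOfLP_marginal_j hs hp⟩

end boxOfLP

end NonSignaling

theorem ns_box_eq_lp_general {X Y : Type*} [Fintype X] [Fintype Y] (W : X → Y → ℝ)
    (hW_nonneg : ∀ x y, 0 ≤ W x y)
    (k : ℕ) (hk : 1 ≤ k) (hkX : k ≤ Fintype.card X) :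
    sSup { v : ℝ | ∃ P : Fin k → Y → X → Fin k → ℝ,
        (∀ i y x j, 0 ≤ P i y x j) ∧
        (∀ i y, ∑ x, ∑ j, P i y x j = 1) ∧
        (∃ PA : Fin k → X → ℝ, ∀ i y x, ∑ j, P i y x j = PA i x) ∧
        (∃ PB : Y → Fin k → ℝ, ∀ i y j, ∑ x, P i y x j = PB y j) ∧
        v = (1 / k) * ∑ i, ∑ x, ∑ y, W x y * P i y x i } =
      SchanNS W k := by
  have : Nonempty (Fin k) := ⟨⟨0, hk⟩⟩
  apply csSup_eq_csSup_of_forall_exists_le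
  · rintro _ ⟨P, hP0, hP1, hPA, hPB, rfl⟩
    have hP : IsNonSignalingBox P := ⟨hP0, hP1, hPA, hPB⟩
    obtain ⟨p, hrp, hp1, hp⟩ := hP.exists_diag_le_sum_eq_card (by simpa using hkX)
    refine ⟨_, ⟨fun x y => ∑ i, P i y x i, p, fun x y => sum_nonneg fun i _ => hP0 i y x i,
      hrp, hp1, fun y => (hP.sum_diag_eq_one y).le, by simpa using hp, rfl⟩, ?_⟩
    rw [sum_sum_sum_mul_diag]
  · rintro _ ⟨r, p, hr0, hrp, -, hr1, hp, rfl⟩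
    obtain ⟨s, hrs, hsp, hs⟩ :=
      exists_tight_of_sum_le_one hrp hr1 (by rw [hp]; exact_mod_cast hk)
    obtain ⟨hP0, hP1, hPA, hPB⟩ := isNonSignalingBox_boxOfLP (ι := Fin k)
      (fun x y => (hr0 x y).trans (hrs x y)) hsp hs (by simpa using hp)
    refine ⟨_, ⟨boxOfLP s p, hP0, hP1, hPA, hPB, rfl⟩, ?_⟩
    rw [sum_sum_sum_mul_boxOfLP_diag]
    gcongr with x _ y _
    · exact hW_nonneg x y
    · exact hrs x y

/-- the maximum success probability achievable with an arbitrary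
non-signaling box between sender and receiver equals the LP value `S^NS(W,k)` (for
`k ≤ |X|`).  A box `P i y x j = P(x,j|i,y)` is non-signaling when its marginal on `x` is
independent of `y` and its marginal on `j` is independent of `i`. -/
theorem ns_box_eq_lp {X Y : Type*} [Fintype X] [Fintype Y] (W : X → Y → ℝ)
    (hW_nonneg : ∀ x y, 0 ≤ W x y) (hW_sum : ∀ x, ∑ y, W x y = 1)
    (k : ℕ) (hk : 1 ≤ k) (hkX : k ≤ Fintype.card X) :
    sSup { v : ℝ | ∃ P : Fin k → Y → X → Fin k → ℝ,
        (∀ i y x j, 0 ≤ P i y x j) ∧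
        (∀ i y, ∑ x, ∑ j, P i y x j = 1) ∧
        (∃ PA : Fin k → X → ℝ, ∀ i y x, ∑ j, P i y x j = PA i x) ∧
        (∃ PB : Y → Fin k → ℝ, ∀ i y j, ∑ x, P i y x j = PB y j) ∧
        v = (1 / k) * ∑ i, ∑ x, ∑ y, W x y * P i y x i } =
      SchanNS W k :=
  ns_box_eq_lp_general W hW_nonneg k hk hkX
end

section
/- Hypothesis-testing characterization: for any channel W and k ≤ |X|, 1 − S^NS(W,k) = min over distributions μ on X of max over distributions ν on Y of β_{1−1/k}(μ·ν, μ·W), where β_α(P,Q) = min{ ∑_z Q(z)T(z) : T : Z → [0,1], ∑_z P(z)T(z) ≥ α }. -/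
open Finset

/-- Optimal type-II error `β_α(P,Q)` of a hypothesis test distinguishing `P` from `Q`. -/
noncomputable def betaHT {Z : Type*} [Fintype Z] (α : ℝ) (P Q : Z → ℝ) : ℝ :=
  sInf { v : ℝ | ∃ T : Z → ℝ, (∀ z, 0 ≤ T z) ∧ (∀ z, T z ≤ 1) ∧
    α ≤ ∑ z, P z * T z ∧ v = ∑ z, Q z * T z }

/-!
Both sides are linear programs and the identity is an explicit minimax. Given a non-signaling
strategy `(r, p)` of value `v`, the input distribution `μ = p / k` and the test `T = 1 - r / p`
meet the constraint `∑ μ·ν T ≥ 1 - 1/k` for every `ν` and have type-II error `1 - v`.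
Conversely, fix `μ`. For each output `y`, the fractional knapsack
`min {∑ₓ W(y|x) u(x) : 0 ≤ u ≤ μ, ∑ u = 1 - 1/k}` is solved by filling `u` along increasing
`W(y|·)` up to a threshold `t_y`. The slack `r = k (μ - u)` is a non-signaling strategy of value
`1 - V`, where `V` is the total knapsack value, and the thresholds, normalized to a distribution
`ν`, are Lagrange multipliers showing `β(μ·ν, μ·W) ≥ V`.
-/

section HypothesisTesting

variable {Z : Type*} [Fintype Z] {α : ℝ} {P Q : Z → ℝ}

lemma betaHT_le (hQ : 0 ≤ Q) (T : Z → ℝ) (hT0 : 0 ≤ T) (hT1 : T ≤ 1)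
    (hα : α ≤ ∑ z, P z * T z) : betaHT α P Q ≤ ∑ z, Q z * T z :=
  csInf_le ⟨0, by
    rintro _ ⟨T', hT'0, -, -, rfl⟩
    exact sum_nonneg fun z _ => mul_nonneg (hQ z) (hT'0 z)⟩ ⟨T, hT0, hT1, hα, rfl⟩

lemma le_betaHT {c : ℝ} (hα : α ≤ ∑ z, P z)
    (h : ∀ T : Z → ℝ, 0 ≤ T → T ≤ 1 → α ≤ ∑ z, P z * T z → c ≤ ∑ z, Q z * T z) :
    c ≤ betaHT α P Q := by
  refine le_csInf ⟨_, 1, fun _ => zero_le_one, fun _ => le_rfl, by simpa using hα, rfl⟩ ?_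
  rintro _ ⟨T, hT0, hT1, hTα, rfl⟩
  exact h T hT0 hT1 hTα

lemma betaHT_nonneg (hQ : 0 ≤ Q) (hα : α ≤ ∑ z, P z) : 0 ≤ betaHT α P Q :=
  le_betaHT hα fun _ hT0 _ _ => sum_nonneg fun z _ => mul_nonneg (hQ z) (hT0 z)

/-- Weak LP duality for `β_α`, with multiplier `l` on the constraint `α ≤ ∑ P T`. -/
lemma mul_sub_sum_max_le_betaHT {l : ℝ} (hl : 0 ≤ l) (hα : α ≤ ∑ z, P z) :
    l * α - ∑ z, max (l * P z - Q z) 0 ≤ betaHT α P Q := by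
  refine le_betaHT hα fun T hT0 hT1 hTα => ?_
  have pointwise : ∀ z, (l * P z - Q z) * T z ≤ max (l * P z - Q z) 0 := fun z =>
    (mul_le_mul_of_nonneg_right (le_max_left _ 0) (hT0 z)).trans
      (mul_le_of_le_one_right (le_max_right _ _) (hT1 z))
  calc l * α - ∑ z, max (l * P z - Q z) 0
      ≤ l * ∑ z, P z * T z - ∑ z, (l * P z - Q z) * T z := by
        gcongr
        exact pointwise _
    _ = ∑ z, Q z * T z := by
        simp only [mul_sum, ← sum_sub_distrib]
        exact sum_congr rfl fun z _ => by ring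

end HypothesisTesting

lemma exists_mem_Icc_sum_eq {X : Type*} [Fintype X] {f g : X → ℝ} (hfg : f ≤ g) {a : ℝ}
    (ha : a ∈ Set.Icc (∑ x, f x) (∑ x, g x)) : ∃ h ∈ Set.Icc f g, ∑ x, h x = a := by
  let S : (X → ℝ) →ₗ[ℝ] ℝ := ∑ x, LinearMap.proj x
  have hS : ∀ h, S h = ∑ x, h x := fun h => by simp [S]
  have hconn := ((convex_Icc f g).linear_image S).ordConnected
  obtain ⟨h, hmem, rfl⟩ := hconn.out ⟨f, Set.left_mem_Icc.2 hfg, hS f⟩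
    ⟨g, Set.right_mem_Icc.2 hfg, hS g⟩ ha
  exact ⟨h, hmem, (hS h).symm⟩

section FractionalKnapsack

variable {X : Type*} [Fintype X] {μ : X → ℝ} {a : ℝ}

lemma exists_threshold [Nonempty X] (hμ : ∀ x, 0 ≤ μ x) (ha : 0 ≤ a) (haμ : a ≤ ∑ x, μ x)
    (w : X → ℝ) :
    ∃ c, (∑ x with w x < w c, μ x) ≤ a ∧ a ≤ ∑ x with w x ≤ w c, μ x := by
  classical
  let S := univ.filter fun c => a ≤ ∑ x with w x ≤ w c, μ x
  obtain ⟨cmax, -, hcmax⟩ := exists_max_image univ w univ_nonempty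
  have hcmaxS : cmax ∈ S := by
    simpa [S, filter_true_of_mem fun x _ => hcmax x (mem_univ x)] using haμ
  obtain ⟨c, hcS, hcmin⟩ := S.exists_min_image w ⟨cmax, hcmaxS⟩
  refine ⟨c, not_lt.1 fun hlt => ?_, (mem_filter.1 hcS).2⟩
  obtain ⟨c', hc', hc'max⟩ :=
    exists_max_image _ w (nonempty_of_sum_ne_zero (ha.trans_lt hlt).ne')
  have hc'S : c' ∈ S := by
    refine mem_filter.2 ⟨mem_univ _, hlt.le.trans (sum_le_sum_of_subset_of_nonneg ?_ ?_)⟩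
    · exact fun x hx => mem_filter.2 ⟨mem_univ x, hc'max x hx⟩
    · exact fun x _ _ => hμ x
  exact (hcmin c' hc'S).not_gt (mem_filter.1 hc').2

lemma exists_fractional_knapsack [Nonempty X] (hμ : ∀ x, 0 ≤ μ x) (ha : 0 ≤ a)
    (haμ : a ≤ ∑ x, μ x) (w : X → ℝ) :
    ∃ c, ∃ u : X → ℝ, (∀ x, 0 ≤ u x) ∧ (∀ x, u x ≤ μ x) ∧ ∑ x, u x = a ∧
      ∑ x, w x * u x = w c * a - ∑ x, μ x * max (w c - w x) 0 := by
  classical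
  obtain ⟨c, hlo, hhi⟩ := exists_threshold hμ ha haμ w
  let L x := if w x < w c then μ x else 0
  let U x := if w x ≤ w c then μ x else 0
  have hLU : L ≤ U := fun x => by
    simp only [L, U]
    split_ifs <;> linarith [hμ x]
  obtain ⟨u, ⟨hLu, huU⟩, hsum⟩ := exists_mem_Icc_sum_eq hLU
    ⟨by simpa [L, sum_filter] using hlo, by simpa [U, sum_filter] using hhi⟩
  have slack : ∀ x, w x * u x = w c * u x - μ x * max (w c - w x) 0 := fun x => by
    have hL := hLu x
    have hU := huU x
    rcases lt_trichotomy (w x) (w c) with h | h | h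
    · simp only [L, U, h, h.le, if_true] at hL hU
      rw [max_eq_left (by linarith), le_antisymm hU hL]; ring
    · rw [h, sub_self, max_self]; ring
    · simp only [L, U, h.not_gt, h.not_ge, if_false] at hL hU
      rw [max_eq_right (by linarith), le_antisymm hU hL]; ring
  refine ⟨c, u, fun x => ?_, fun x => ?_, hsum, ?_⟩
  · exact le_trans (by simp only [L]; split_ifs <;> linarith [hμ x]) (hLu x)
  · exact (huU x).trans (by simp only [U]; split_ifs <;> linarith [hμ x])
  · simp only [slack, sum_sub_distrib, ← mul_sum, hsum]

end FractionalKnapsack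

lemma exists_mem_stdSimplex_eq_sum_mul {Y : Type*} [Fintype Y] [Nonempty Y] {t : Y → ℝ}
    (ht : ∀ y, 0 ≤ t y) : ∃ ν ∈ stdSimplex ℝ Y, ∀ y, t y = (∑ y', t y') * ν y := by
  rcases (sum_nonneg fun y _ => ht y).eq_or_lt with h | h
  · obtain ⟨⟨ν, hν⟩⟩ : Nonempty (stdSimplex ℝ Y) := inferInstance
    refine ⟨ν, hν, fun y => ?_⟩
    rw [← h, zero_mul]
    exact (sum_eq_zero_iff_of_nonneg fun y _ => ht y).1 h.symm y (mem_univ y)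
  · refine ⟨fun y => t y / ∑ y', t y', ⟨fun y => div_nonneg (ht y) h.le, ?_⟩, fun y => ?_⟩
    · rw [← sum_div, div_self h.ne']
    · field_simp

section NonSignaling

variable {X Y : Type*} [Fintype X] {W : X → Y → ℝ} {k : ℕ}

structure IsNSStrategy (k : ℕ) (r : X → Y → ℝ) (p : X → ℝ) : Prop where
  r_nonneg : ∀ x y, 0 ≤ r x y
  r_le_p : ∀ x y, r x y ≤ p x
  p_le_one : ∀ x, p x ≤ 1
  sum_r_le_one : ∀ y, ∑ x, r x y ≤ 1
  sum_p : ∑ x, p x = k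

lemma sum_sum_mul_le_sum_of_le [Fintype Y] (hW0 : ∀ x y, 0 ≤ W x y) (hW1 : ∀ x, ∑ y, W x y = 1)
    {r : X → Y → ℝ} {p : X → ℝ} (hrp : ∀ x y, r x y ≤ p x) :
    ∑ x, ∑ y, W x y * r x y ≤ ∑ x, p x :=
  sum_le_sum fun x _ => calc
    ∑ y, W x y * r x y ≤ ∑ y, W x y * p x := by gcongr with y; exacts [hW0 x y, hrp x y]
    _ = p x := by rw [← sum_mul, hW1 x, one_mul]

lemma le_SchanNS [Fintype Y] (hW0 : ∀ x y, 0 ≤ W x y) (hW1 : ∀ x, ∑ y, W x y = 1)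
    {r : X → Y → ℝ} {p : X → ℝ} (h : IsNSStrategy k r p) :
    1 / k * ∑ x, ∑ y, W x y * r x y ≤ SchanNS W k := by
  refine le_csSup ⟨1, ?_⟩ ⟨r, p, h.1, h.2, h.3, h.4, h.5, rfl⟩
  rintro _ ⟨r, p, -, hrp, -, -, hp, rfl⟩
  calc 1 / k * ∑ x, ∑ y, W x y * r x y ≤ 1 / k * ∑ x, p x :=
        mul_le_mul_of_nonneg_left (sum_sum_mul_le_sum_of_le hW0 hW1 hrp) (by positivity)
    _ = 1 / k * k := by rw [hp]
    _ ≤ 1 := by rcases eq_or_ne (k : ℝ) 0 with hk | hk <;> simp [hk]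

lemma SchanNS_le [Fintype Y] (hkX : k ≤ Fintype.card X) {c : ℝ}
    (h : ∀ r p, IsNSStrategy k r p → 1 / k * ∑ x, ∑ y, W x y * r x y ≤ c) :
    SchanNS W k ≤ c := by
  obtain ⟨p, ⟨hp0, hp1⟩, hp⟩ := exists_mem_Icc_sum_eq (f := 0) (g := 1) (a := k)
    zero_le_one ⟨by simp, by simpa using hkX⟩
  refine csSup_le
    ⟨_, 0, p, fun _ _ => le_rfl, fun x _ => hp0 x, hp1, fun _ => by simp, hp, rfl⟩ ?_
  rintro _ ⟨r, p, h1, h2, h3, h4, h5, rfl⟩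
  exact h r p ⟨h1, h2, h3, h4, h5⟩

lemma IsNSStrategy.div_mem_stdSimplex [Nonempty Y] {r : X → Y → ℝ} {p : X → ℝ}
    (h : IsNSStrategy k r p) (hk : 0 < k) : (fun x => p x / k) ∈ stdSimplex ℝ X := by
  refine ⟨fun x => div_nonneg ?_ k.cast_nonneg, ?_⟩
  · exact (h.r_nonneg x (Classical.arbitrary Y)).trans (h.r_le_p x _)
  · rw [← sum_div, h.sum_p, div_self (by positivity)]

end NonSignaling

section WorstCaseTest

variable {X Y : Type*} [Fintype X] [Fintype Y] {W : X → Y → ℝ} {α : ℝ} {μ : X → ℝ}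

noncomputable def supBetaHT (W : X → Y → ℝ) (α : ℝ) (μ : X → ℝ) : ℝ :=
  sSup { w : ℝ | ∃ ν : Y → ℝ, (∀ y, 0 ≤ ν y) ∧ (∑ y, ν y = 1) ∧
    w = betaHT α (fun z : X × Y => μ z.1 * ν z.2) (fun z : X × Y => μ z.1 * W z.1 z.2) }

lemma sum_mul_eq_one_of_mem_stdSimplex {ν : Y → ℝ} (hμ : μ ∈ stdSimplex ℝ X)
    (hν : ν ∈ stdSimplex ℝ Y) : ∑ z : X × Y, μ z.1 * ν z.2 = 1 := by
  rw [Fintype.sum_prod_type, ← Fintype.sum_mul_sum, hμ.2, hν.2, one_mul]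

lemma betaHT_le_supBetaHT (hW0 : ∀ x y, 0 ≤ W x y) (hμ : μ ∈ stdSimplex ℝ X) (hα : α ≤ 1)
    {ν : Y → ℝ} (hν : ν ∈ stdSimplex ℝ Y) :
    betaHT α (fun z : X × Y => μ z.1 * ν z.2) (fun z : X × Y => μ z.1 * W z.1 z.2) ≤
      supBetaHT W α μ := by
  refine le_csSup ⟨∑ z : X × Y, μ z.1 * W z.1 z.2, ?_⟩ ⟨ν, hν.1, hν.2, rfl⟩
  rintro _ ⟨ν, hν0, hν1, rfl⟩
  simpa using betaHT_le (P := fun z : X × Y => μ z.1 * ν z.2)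
    (fun z : X × Y => mul_nonneg (hμ.1 z.1) (hW0 z.1 z.2)) 1 (fun _ => zero_le_one) le_rfl
    (by simpa [sum_mul_eq_one_of_mem_stdSimplex hμ ⟨hν0, hν1⟩] using hα)

lemma supBetaHT_nonneg (hW0 : ∀ x y, 0 ≤ W x y) (hμ : μ ∈ stdSimplex ℝ X) (hα : α ≤ 1) :
    0 ≤ supBetaHT W α μ := by
  refine Real.sSup_nonneg ?_
  rintro _ ⟨ν, hν0, hν1, rfl⟩
  exact betaHT_nonneg (fun z => mul_nonneg (hμ.1 z.1) (hW0 z.1 z.2))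
    (by rwa [sum_mul_eq_one_of_mem_stdSimplex hμ ⟨hν0, hν1⟩])

lemma supBetaHT_le [Nonempty Y] {c : ℝ} (h : ∀ ν ∈ stdSimplex ℝ Y,
      betaHT α (fun z : X × Y => μ z.1 * ν z.2) (fun z : X × Y => μ z.1 * W z.1 z.2) ≤ c) :
    supBetaHT W α μ ≤ c := by
  refine csSup_le ?_ ?_
  · obtain ⟨⟨ν, hν0, hν1⟩⟩ : Nonempty (stdSimplex ℝ Y) := inferInstance
    exact ⟨_, ν, hν0, hν1, rfl⟩
  · rintro _ ⟨ν, hν0, hν1, rfl⟩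
    exact h ν ⟨hν0, hν1⟩

end WorstCaseTest

section MetaConverse

variable {X Y : Type*} [Fintype X] [Fintype Y] {W : X → Y → ℝ} {k : ℕ}

lemma betaHT_le_one_sub_of_isNSStrategy (hW0 : ∀ x y, 0 ≤ W x y)
    (hW1 : ∀ x, ∑ y, W x y = 1) (hk : 0 < k) {r : X → Y → ℝ} {p : X → ℝ}
    (h : IsNSStrategy k r p) {ν : Y → ℝ} (hν : ν ∈ stdSimplex ℝ Y) :
    betaHT (1 - 1 / k) (fun z : X × Y => p z.1 / k * ν z.2)
        (fun z : X × Y => p z.1 / k * W z.1 z.2) ≤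
      1 - 1 / k * ∑ x, ∑ y, W x y * r x y := by
  have hp0 : ∀ x y, 0 ≤ p x := fun x y => (h.r_nonneg x y).trans (h.r_le_p x y)
  let T : X × Y → ℝ := fun z => 1 - r z.1 z.2 / p z.1
  have hT0 : 0 ≤ T := fun z =>
    sub_nonneg.2 (div_le_one_of_le₀ (h.r_le_p z.1 z.2) (hp0 z.1 z.2))
  have hT1 : T ≤ 1 := fun z =>
    sub_le_self _ (div_nonneg (h.r_nonneg z.1 z.2) (hp0 z.1 z.2))
  -- when `p x = 0` also `r x y = 0`, so the junk value `r x y / 0 = 0` is harmless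
  have hpT : ∀ x y, p x * T (x, y) = p x - r x y := fun x y => by
    rcases eq_or_ne (p x) 0 with hpx | hpx
    · simp [T, hpx, le_antisymm (hpx ▸ h.r_le_p x y) (h.r_nonneg x y)]
    · simp [T, mul_sub, mul_div_cancel₀ _ hpx]
  have hk' : (k : ℝ) ≠ 0 := by positivity
  have hα : 1 - 1 / k ≤ ∑ z : X × Y, p z.1 / k * ν z.2 * T z := calc
    1 - 1 / k = ∑ y, ν y * (1 - 1 / k) := by rw [← sum_mul, hν.2, one_mul]
    _ ≤ ∑ y, ν y * (1 - 1 / k * ∑ x, r x y) := by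
      gcongr with y
      · exact hν.1 y
      · exact mul_le_of_le_one_right (by positivity) (h.sum_r_le_one y)
    _ = ∑ z : X × Y, p z.1 / k * ν z.2 * T z := by
      rw [Fintype.sum_prod_type_right]
      refine sum_congr rfl fun y _ => ?_
      simp only [fun x => show p x / k * ν y * T (x, y) = ν y / k * (p x * T (x, y)) by ring,
        hpT, ← mul_sum, sum_sub_distrib, h.sum_p]
      field_simp
  calc _ ≤ ∑ z : X × Y, p z.1 / k * W z.1 z.2 * T z :=
        betaHT_le (fun z => mul_nonneg (div_nonneg (hp0 z.1 z.2) k.cast_nonneg) (hW0 z.1 z.2))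
          T hT0 hT1 hα
    _ = 1 - 1 / k * ∑ x, ∑ y, W x y * r x y := by
      have hrow : ∀ x, ∑ y, p x / k * W x y * T (x, y) = (p x - ∑ y, W x y * r x y) / k :=
        fun x => by
          simp only [fun y => show p x / k * W x y * T (x, y) = (W x y * p x - W x y * r x y) / k
            by rw [← mul_sub, ← hpT]; ring]
          rw [← sum_div, sum_sub_distrib, ← sum_mul, hW1, one_mul]
      rw [Fintype.sum_prod_type, sum_congr rfl fun x _ => hrow x, ← sum_div, sum_sub_distrib,
        h.sum_p]
      field_simp

lemma one_sub_sum_le_SchanNS (hW0 : ∀ x y, 0 ≤ W x y) (hW1 : ∀ x, ∑ y, W x y = 1)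
    (hk : 0 < k) (hkX : k ≤ Fintype.card X) {μ : X → ℝ} (hμ : μ ∈ stdSimplex ℝ X)
    {u : Y → X → ℝ} (hu0 : ∀ y x, 0 ≤ u y x) (huμ : ∀ y x, u y x ≤ μ x)
    (hu : ∀ y, ∑ x, u y x = 1 - 1 / k) :
    1 - ∑ y, ∑ x, W x y * u y x ≤ SchanNS W k := by
  have hk' : (k : ℝ) ≠ 0 := by positivity
  obtain ⟨p, ⟨hqp, hp1⟩, hp⟩ := exists_mem_Icc_sum_eq (f := fun x => min (k * μ x) 1) (g := 1)
    (a := k) (fun x => min_le_right _ _) ⟨(sum_le_sum fun x _ => min_le_left _ _).trans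
      (by rw [← mul_sum, hμ.2, mul_one]), by simpa using hkX⟩
  let r x y := (k : ℝ) * (μ x - u y x)
  have hr0 : ∀ x y, 0 ≤ r x y := fun x y => mul_nonneg k.cast_nonneg (sub_nonneg.2 (huμ y x))
  have hr1 : ∀ y, ∑ x, r x y = 1 := fun y => by
    simp only [r, ← mul_sum, sum_sub_distrib, hμ.2, hu]
    field_simp
    ring
  have hrp : ∀ x y, r x y ≤ p x := fun x y => by
    refine le_trans (le_min ?_ ?_) (hqp x)
    · exact mul_le_mul_of_nonneg_left (sub_le_self _ (hu0 y x)) k.cast_nonneg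
    · exact (single_le_sum (fun x _ => hr0 x y) (mem_univ x)).trans (hr1 y).le
  have hrow : ∀ x, ∑ y, W x y * r x y = k * (μ x - ∑ y, W x y * u y x) := fun x => by
    simp only [r, fun y => show W x y * (k * (μ x - u y x)) = k * (W x y * μ x - W x y * u y x)
      by ring]
    rw [← mul_sum, sum_sub_distrib, ← sum_mul, hW1, one_mul]
  calc 1 - ∑ y, ∑ x, W x y * u y x = 1 / k * ∑ x, ∑ y, W x y * r x y := by
        rw [sum_congr rfl fun x _ => hrow x, ← mul_sum, sum_sub_distrib, hμ.2, sum_comm]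
        field_simp
    _ ≤ SchanNS W k := le_SchanNS hW0 hW1 ⟨hr0, hrp, hp1, fun y => (hr1 y).le, hp⟩

lemma one_sub_SchanNS_le_supBetaHT [Nonempty X] [Nonempty Y] (hW0 : ∀ x y, 0 ≤ W x y)
    (hW1 : ∀ x, ∑ y, W x y = 1) (hk : 0 < k) (hkX : k ≤ Fintype.card X) {μ : X → ℝ}
    (hμ : μ ∈ stdSimplex ℝ X) : 1 - SchanNS W k ≤ supBetaHT W (1 - 1 / k) μ := by
  have ha0 : 0 ≤ 1 - 1 / (k : ℝ) :=
    sub_nonneg.2 (div_le_one_of_le₀ (by exact_mod_cast hk) k.cast_nonneg)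
  have ha1 : 1 - 1 / (k : ℝ) ≤ 1 := sub_le_self _ (by positivity)
  choose c u hu0 huμ hu hWu using fun y =>
    exists_fractional_knapsack hμ.1 ha0 (hμ.2 ▸ ha1) (W · y)
  obtain ⟨ν, hν, ht⟩ := exists_mem_stdSimplex_eq_sum_mul fun y => hW0 (c y) y
  have hmax : ∀ x y, max ((∑ y', W (c y') y') * (μ x * ν y) - μ x * W x y) 0 =
      μ x * max (W (c y) y - W x y) 0 := fun x y => by
    rw [mul_max_of_nonneg _ _ (hμ.1 x), mul_zero, ht y]
    congr 1
    ring
  calc 1 - SchanNS W k ≤ ∑ y, ∑ x, W x y * u y x := by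
        linarith [one_sub_sum_le_SchanNS hW0 hW1 hk hkX hμ hu0 huμ hu]
    _ = (∑ y, W (c y) y) * (1 - 1 / k) -
          ∑ z : X × Y, max ((∑ y, W (c y) y) * (μ z.1 * ν z.2) - μ z.1 * W z.1 z.2) 0 := by
        rw [Fintype.sum_prod_type_right]
        simp only [hmax, hWu, sum_sub_distrib]
        rw [sum_mul]
    _ ≤ _ := mul_sub_sum_max_le_betaHT (sum_nonneg fun y _ => hW0 (c y) y)
        (by rwa [sum_mul_eq_one_of_mem_stdSimplex hμ hν])
    _ ≤ supBetaHT W (1 - 1 / k) μ := betaHT_le_supBetaHT hW0 hμ ha1 hν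

end MetaConverse

/-- hypothesis-testing characterization of the meta-converse:
`1 − S^NS(W,k) = min_μ max_ν β_{1−1/k}(μ·ν, μ·W)`. -/
theorem meta_converse_hypothesis_testing {X Y : Type*} [Fintype X] [Fintype Y]
    (W : X → Y → ℝ) (hW_nonneg : ∀ x y, 0 ≤ W x y) (hW_sum : ∀ x, ∑ y, W x y = 1)
    (k : ℕ) (hk : 1 ≤ k) (hkX : k ≤ Fintype.card X) :
    1 - SchanNS W k =
      sInf { v : ℝ | ∃ μ : X → ℝ, (∀ x, 0 ≤ μ x) ∧ (∑ x, μ x = 1) ∧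
        v = sSup { w : ℝ | ∃ ν : Y → ℝ, (∀ y, 0 ≤ ν y) ∧ (∑ y, ν y = 1) ∧
          w = betaHT (1 - 1 / (k : ℝ))
                (fun z : X × Y => μ z.1 * ν z.2)
                (fun z : X × Y => μ z.1 * W z.1 z.2) } } := by
  change _ = sInf {v | ∃ μ : X → ℝ, (∀ x, 0 ≤ μ x) ∧ (∑ x, μ x = 1) ∧
    v = supBetaHT W (1 - 1 / k) μ}
  have : Nonempty X := Fintype.card_pos_iff.1 (hk.trans hkX)
  have : Nonempty Y := univ_nonempty_iff.1 <| nonempty_of_sum_ne_zero <|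
    (hW_sum (Classical.arbitrary X)).symm ▸ one_ne_zero
  have ha1 : 1 - 1 / (k : ℝ) ≤ 1 := sub_le_self _ (by positivity)
  have hbdd : BddBelow {v | ∃ μ : X → ℝ, (∀ x, 0 ≤ μ x) ∧ (∑ x, μ x = 1) ∧
      v = supBetaHT W (1 - 1 / k) μ} :=
    ⟨0, by rintro _ ⟨μ, hμ0, hμ1, rfl⟩; exact supBetaHT_nonneg hW_nonneg ⟨hμ0, hμ1⟩ ha1⟩
  refine le_antisymm (le_csInf ?_ ?_) ?_
  · obtain ⟨⟨μ, hμ0, hμ1⟩⟩ : Nonempty (stdSimplex ℝ X) := inferInstance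
    exact ⟨_, μ, hμ0, hμ1, rfl⟩
  · rintro _ ⟨μ, hμ0, hμ1, rfl⟩
    exact one_sub_SchanNS_le_supBetaHT hW_nonneg hW_sum hk hkX ⟨hμ0, hμ1⟩
  · rw [le_sub_comm]
    refine SchanNS_le hkX fun r p h => ?_
    obtain ⟨hμ0, hμ1⟩ := h.div_mem_stdSimplex hk
    rw [le_sub_comm]
    exact (csInf_le hbdd ⟨_, hμ0, hμ1, rfl⟩).trans <|
      supBetaHT_le fun ν hν => betaHT_le_one_sub_of_isNSStrategy hW_nonneg hW_sum hk h hν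
end
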